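/- arXiv:1512.06163 — 8 statements merged into one kernel-verified Lean document; each statement's English description precedes it below -/
import Mathlib

section
/- Let d ≥ 1, r > 0 and 1 ≤ q ≤ ∞. Let φ : ℝ^d → ℝ be twice continuously differentiable with ‖∂_β φ‖_q < ∞ for every multi-index β with |β| ≤ 2. Then ‖⟨φ⟩(·,r) − φ‖_q ≤ (d/2) · r² · max_{|β|=2} ‖∂_β φ‖_q. -/
/-!
Write `ballAvg d φ x r - φ x` as the average over `y ∈ B(0, r)` of the Taylor remainder
`φ (x + y) - φ x - Dφ(x) y`; the linear term averages to zero because the ball is symmetric.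
Minkowski's integral inequality then reduces the claim to
`‖φ (· + y) - φ - Dφ(·) y‖_q ≤ (d / 2) |y|² M` for each `y`, where `M = max_{|β| = 2} ‖∂_β φ‖_q`.
Taylor's formula with integral remainder, Minkowski again and translation invariance of `‖·‖_q`
bound the left side by `½ ‖D²φ(·)(y, y)‖_q`, and expanding `D²φ(·)(y, y) = ∑ y_i y_j ∂_i ∂_j φ`
gives `½ (∑ |y_i|)² M ≤ (d / 2) |y|² M` by Cauchy–Schwarz.
-/

open MeasureTheory Metric
open scoped ENNReal

/-- The average of `φ` over the ball of centre `x` and radius `r`. -/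
noncomputable def ballAvg (d : ℕ) (φ : EuclideanSpace ℝ (Fin d) → ℝ)
    (x : EuclideanSpace ℝ (Fin d)) (r : ℝ) : ℝ :=
  (volume (ball (0 : EuclideanSpace ℝ (Fin d)) r)).toReal⁻¹ * ∫ y in ball x r, φ y

/-- The `k`-th order partial derivative of `φ` in the coordinate directions
given by `idx : Fin k → Fin d` (the multi-index `β` has `|β| = k`). -/
noncomputable def pderiv' (d k : ℕ) (φ : EuclideanSpace ℝ (Fin d) → ℝ)
    (idx : Fin k → Fin d) (x : EuclideanSpace ℝ (Fin d)) : ℝ :=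
  iteratedFDeriv ℝ k φ x (fun j => EuclideanSpace.single (idx j) (1 : ℝ))

open Set Function

namespace ENNReal

lemma iSup_min_natCast_rpow (a : ℝ≥0∞) {p : ℝ} (hp : 0 < p) :
    ⨆ n : ℕ, min a n ^ p = a ^ p := by
  calc ⨆ n : ℕ, min a n ^ p = (⨆ n : ℕ, a ⊓ (n : ℝ≥0∞)) ^ p :=
        ((orderIsoRpow p hp).map_iSup fun n : ℕ => min a n).symm
    _ = a ^ p := by rw [← inf_iSup_eq, iSup_natCast, inf_top_eq]

lemma le_rpow_of_le_mul_rpow_holderConjugate {p p' : ℝ} (hpp' : p.HolderConjugate p')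
    {I T : ℝ≥0∞} (hI : I ≠ ⊤) (h : I ≤ T * I ^ (1 / p')) : I ≤ T ^ p := by
  rcases eq_or_ne I 0 with rfl | hI0
  · exact zero_le
  have hsplit : I = I ^ (1 / p) * I ^ (1 / p') := by
    rw [← rpow_add _ _ hI0 hI, one_div, one_div, hpp'.inv_add_inv_eq_one, rpow_one]
  have hroot : I ^ (1 / p) ≤ T := by
    rw [← ENNReal.mul_le_mul_iff_left (rpow_pos (pos_iff_ne_zero.2 hI0) hI).ne'
      (rpow_ne_top_of_nonneg (one_div_nonneg.2 hpp'.symm.nonneg) hI), ← hsplit]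
    exact h
  calc I = (I ^ (1 / p)) ^ p := by rw [← rpow_mul, one_div_mul_cancel hpp'.ne_zero, rpow_one]
    _ ≤ T ^ p := rpow_le_rpow hroot hpp'.nonneg

lemma enorm_inv_toReal_mul_mul_cancel {a : ℝ≥0∞} (ha₀ : a ≠ 0) (ha : a ≠ ⊤) (c : ℝ≥0∞) :
    ‖a.toReal⁻¹‖ₑ * (c * a) = c := by
  rw [Real.enorm_eq_ofReal (by positivity), ofReal_inv_of_pos (toReal_pos ha₀ ha),
    ofReal_toReal ha, mul_comm c, ← mul_assoc, ENNReal.inv_mul_cancel ha₀ ha, one_mul]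

end ENNReal

namespace MeasureTheory

variable {α β : Type*} [MeasurableSpace α] [MeasurableSpace β] {μ : Measure α} {ν : Measure β}

lemma lintegral_rpow_eq_iSup_setLIntegral_min_rpow [SigmaFinite μ] {G : α → ℝ≥0∞}
    (hG : Measurable G) {p : ℝ} (hp : 0 < p) :
    ∫⁻ x, G x ^ p ∂μ = ⨆ n : ℕ, ∫⁻ x in spanningSets μ n, min (G x) n ^ p ∂μ := by
  set h : ℕ → α → ℝ≥0∞ := fun n => (spanningSets μ n).indicator fun x => min (G x) n ^ p
  have h_mono : Monotone h := fun m n hmn x =>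
    (indicator_le_indicator_of_subset (monotone_spanningSets μ hmn) (fun _ => zero_le) x).trans
      (indicator_le_indicator (by gcongr))
  have h_sup (x : α) : ⨆ n, h n x = G x ^ p := by
    obtain ⟨N, hN⟩ := mem_iUnion.1 (iUnion_spanningSets μ ▸ mem_univ x)
    calc ⨆ n, h n x = ⨆ n, h (n + N) x :=
          (Monotone.iSup_nat_add (fun m n hmn => h_mono hmn x) N).symm
      _ = ⨆ n : ℕ, min (G x) ↑(n + N) ^ p := iSup_congr fun n =>
          indicator_of_mem (monotone_spanningSets μ (Nat.le_add_left N n) hN) _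
      _ = ⨆ n : ℕ, min (G x) n ^ p :=
          Monotone.iSup_nat_add (f := fun n : ℕ => min (G x) n ^ p)
            (fun m n hmn => ENNReal.rpow_le_rpow (min_le_min_left _ (Nat.cast_le.2 hmn)) hp.le) N
      _ = G x ^ p := ENNReal.iSup_min_natCast_rpow _ hp
  have h_meas (n : ℕ) : Measurable (h n) :=
    ((hG.min measurable_const).pow_const p).indicator (measurableSet_spanningSets μ n)
  rw [lintegral_congr fun x => (h_sup x).symm, lintegral_iSup h_meas h_mono]
  exact iSup_congr fun n => lintegral_indicator (measurableSet_spanningSets μ n) _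

lemma setLIntegral_min_rpow_le_mul [SFinite μ] [SFinite ν] {p p' : ℝ}
    (hpp' : p.HolderConjugate p') {f : α → β → ℝ≥0∞} (hf : Measurable (uncurry f))
    (s : Set α) (n : ℕ) :
    ∫⁻ x in s, min (∫⁻ y, f x y ∂ν) n ^ p ∂μ ≤
      (∫⁻ y, (∫⁻ x, f x y ^ p ∂μ) ^ (1 / p) ∂ν) *
        (∫⁻ x in s, min (∫⁻ y, f x y ∂ν) n ^ p ∂μ) ^ (1 / p') := by
  set G : α → ℝ≥0∞ := fun x => min (∫⁻ y, f x y ∂ν) n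
  set I := ∫⁻ x in s, G x ^ p ∂μ
  have hG : Measurable G := hf.lintegral_prod_right.min measurable_const
  have hGp : Measurable fun x => G x ^ (p - 1) := hG.pow_const _
  have holder (y : β) : ∫⁻ x in s, G x ^ (p - 1) * f x y ∂μ ≤
      (∫⁻ x, f x y ^ p ∂μ) ^ (1 / p) * I ^ (1 / p') := by
    calc ∫⁻ x in s, G x ^ (p - 1) * f x y ∂μ = ∫⁻ x in s, f x y * G x ^ (p - 1) ∂μ := by
          simp_rw [mul_comm]
      _ ≤ (∫⁻ x in s, f x y ^ p ∂μ) ^ (1 / p) * (∫⁻ x in s, (G x ^ (p - 1)) ^ p' ∂μ) ^ (1 / p') :=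
          ENNReal.lintegral_mul_le_Lp_mul_Lq _ hpp' hf.of_uncurry_right.aemeasurable
            hGp.aemeasurable
      _ ≤ (∫⁻ x, f x y ^ p ∂μ) ^ (1 / p) * I ^ (1 / p') := by
          simp_rw [← ENNReal.rpow_mul, hpp'.sub_one_mul_conj]
          exact mul_le_mul' (ENNReal.rpow_le_rpow (setLIntegral_le_lintegral _ _)
            (one_div_nonneg.2 hpp'.nonneg)) le_rfl
  calc I ≤ ∫⁻ x in s, G x ^ (p - 1) * ∫⁻ y, f x y ∂ν ∂μ := by
        refine lintegral_mono fun x => ?_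
        calc G x ^ p = G x ^ ((p - 1) + 1) := by rw [sub_add_cancel]
          _ = G x ^ (p - 1) * G x := by
              rw [ENNReal.rpow_add_of_nonneg _ _ hpp'.sub_one_pos.le zero_le_one,
                ENNReal.rpow_one]
          _ ≤ G x ^ (p - 1) * ∫⁻ y, f x y ∂ν := by gcongr; exact min_le_left _ _
    _ = ∫⁻ y, ∫⁻ x in s, G x ^ (p - 1) * f x y ∂μ ∂ν := by
        simp_rw [← lintegral_const_mul _ hf.of_uncurry_left]
        exact lintegral_lintegral_swap ((hGp.comp measurable_fst).mul hf).aemeasurable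
    _ ≤ ∫⁻ y, (∫⁻ x, f x y ^ p ∂μ) ^ (1 / p) * I ^ (1 / p') ∂ν := lintegral_mono holder
    _ = (∫⁻ y, (∫⁻ x, f x y ^ p ∂μ) ^ (1 / p) ∂ν) * I ^ (1 / p') :=
        lintegral_mul_const _ ((hf.pow_const p).lintegral_prod_left.pow_const _)

/-- Minkowski's integral inequality. For `p > 1`, Hölder's inequality bounds the left side `I`
by `T * I ^ (1 / p')`, where `T ^ p` is the right side; truncating `∫⁻ y, f x y ∂ν` at height `n`
on the `n`-th spanning set makes `I` finite, so that `I ^ (1 / p')` can be divided out. -/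
theorem lintegral_lintegral_rpow_le [SigmaFinite μ] [SFinite ν] {p : ℝ} (hp : 1 ≤ p)
    {f : α → β → ℝ≥0∞} (hf : Measurable (uncurry f)) :
    ∫⁻ x, (∫⁻ y, f x y ∂ν) ^ p ∂μ ≤ (∫⁻ y, (∫⁻ x, f x y ^ p ∂μ) ^ (1 / p) ∂ν) ^ p := by
  rcases hp.eq_or_lt with rfl | hp
  · simpa using (lintegral_lintegral_swap hf.aemeasurable).le
  have hpp' := Real.HolderConjugate.conjExponent hp
  rw [lintegral_rpow_eq_iSup_setLIntegral_min_rpow hf.lintegral_prod_right hpp'.pos]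
  refine iSup_le fun n => ENNReal.le_rpow_of_le_mul_rpow_holderConjugate hpp' ?_
    (setLIntegral_min_rpow_le_mul hpp' hf _ n)
  refine ne_top_of_le_ne_top (b := (n : ℝ≥0∞) ^ p * μ (spanningSets μ n))
    (ENNReal.mul_ne_top (ENNReal.rpow_ne_top_of_nonneg hpp'.nonneg (ENNReal.natCast_ne_top n))
      (measure_spanningSets_lt_top μ n).ne) ?_
  rw [← setLIntegral_const]
  exact lintegral_mono fun x => ENNReal.rpow_le_rpow (min_le_right _ _) hpp'.nonneg

variable {F : Type*} [NormedAddCommGroup F] [NormedSpace ℝ F] [MeasurableSpace F]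
  [OpensMeasurableSpace F] {g : α → β → F} {w : β → ℝ≥0∞}

lemma eLpNormEssSup_integral_le_of_ae_le [SFinite μ] [SFinite ν] (hg : Measurable (uncurry g))
    (hw : Measurable w) (hbound : ∀ᵐ y ∂ν, eLpNormEssSup (g · y) μ ≤ w y) :
    eLpNormEssSup (fun x => ∫ y, g x y ∂ν) μ ≤ ∫⁻ y, w y ∂ν := by
  have hae : ∀ᵐ x ∂μ, ∀ᵐ y ∂ν, ‖g x y‖ₑ ≤ w y := by
    refine (Measure.ae_ae_comm (measurableSet_le (f := fun z : α × β => ‖g z.1 z.2‖ₑ)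
      hg.enorm (hw.comp measurable_snd))).2 ?_
    filter_upwards [hbound] with y hy
    filter_upwards [ae_le_eLpNormEssSup (f := (g · y))] with x hx using hx.trans hy
  refine eLpNormEssSup_le_of_ae_enorm_bound ?_
  filter_upwards [hae] with x hx
  exact (enorm_integral_le_lintegral_enorm _).trans (lintegral_mono_ae hx)

theorem eLpNorm_integral_le_of_ae_eLpNorm_le [SigmaFinite μ] [SFinite ν] {q : ℝ≥0∞} (hq : 1 ≤ q)
    (hg : Measurable (uncurry g)) (hw : Measurable w)
    (hbound : ∀ᵐ y ∂ν, eLpNorm (g · y) q μ ≤ w y) :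
    eLpNorm (fun x => ∫ y, g x y ∂ν) q μ ≤ ∫⁻ y, w y ∂ν := by
  rcases eq_or_ne q ⊤ with rfl | hq_top
  · simp only [eLpNorm_exponent_top] at hbound ⊢
    exact eLpNormEssSup_integral_le_of_ae_le hg hw hbound
  have hq0 : q ≠ 0 := (zero_lt_one.trans_le hq).ne'
  set p := q.toReal
  have hp : 1 ≤ p := ENNReal.toReal_mono hq_top hq |>.trans_eq' ENNReal.toReal_one.symm
  simp only [eLpNorm_eq_lintegral_rpow_enorm_toReal hq0 hq_top] at hbound ⊢
  calc (∫⁻ x, ‖∫ y, g x y ∂ν‖ₑ ^ p ∂μ) ^ (1 / p)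
      ≤ (∫⁻ x, (∫⁻ y, ‖g x y‖ₑ ∂ν) ^ p ∂μ) ^ (1 / p) := by
        gcongr
        exact enorm_integral_le_lintegral_enorm _
    _ ≤ ((∫⁻ y, (∫⁻ x, ‖g x y‖ₑ ^ p ∂μ) ^ (1 / p) ∂ν) ^ p) ^ (1 / p) := by
        gcongr
        exact lintegral_lintegral_rpow_le hp (f := fun x y => ‖g x y‖ₑ) hg.enorm
    _ = ∫⁻ y, (∫⁻ x, ‖g x y‖ₑ ^ p ∂μ) ^ (1 / p) ∂ν := by
        rw [← ENNReal.rpow_mul, mul_one_div_cancel (by positivity), ENNReal.rpow_one]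
    _ ≤ ∫⁻ y, w y ∂ν := lintegral_mono_ae hbound

end MeasureTheory

lemma sub_sub_fderiv_eq_intervalIntegral {E F : Type*} [NormedAddCommGroup E] [NormedSpace ℝ E]
    [NormedAddCommGroup F] [NormedSpace ℝ F] [CompleteSpace F] {φ : E → F}
    (hφ : ContDiff ℝ 2 φ) (x y : E) :
    φ (x + y) - φ x - fderiv ℝ φ x y =
      ∫ t in 0..1, (1 - t) • iteratedFDeriv ℝ 2 φ (x + t • y) (fun _ => y) := by
  rw [map_add_eq_sum_add_integral_iteratedFDeriv (n := 1) fun t _ => hφ.contDiffAt]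
  simp only [Finset.sum_range_succ, Finset.range_one, Finset.sum_singleton, Nat.factorial_zero,
    Nat.factorial_one, Nat.cast_one, inv_one, one_smul, pow_one, iteratedFDeriv_zero_apply,
    iteratedFDeriv_one_apply]
  abel

section Ball

variable {E F : Type*} [NormedAddCommGroup E] [MeasurableSpace E] [BorelSpace E]
  [NormedAddCommGroup F] [NormedSpace ℝ F] {μ : Measure E}

lemma setIntegral_ball_zero_eq_zero_of_odd [μ.IsNegInvariant] {f : E → F}
    (hf : ∀ y, f (-y) = -f y) (r : ℝ) : ∫ y in ball (0 : E) r, f y ∂μ = 0 := by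
  have h := (Measure.measurePreserving_neg μ).setIntegral_preimage_emb
    measurableEmbedding_neg f (ball (0 : E) r)
  have hball : Neg.neg ⁻¹' ball (0 : E) r = ball 0 r := by ext y; simp
  simp only [hball, hf, integral_neg] at h
  have h2 : (2 : ℝ) • ∫ y in ball (0 : E) r, f y ∂μ = 0 := by
    rw [two_smul]; nth_rewrite 1 [← h]; exact neg_add_cancel _
  exact (smul_eq_zero.1 h2).resolve_left two_ne_zero

lemma setIntegral_ball_zero_comp_add_left [μ.IsAddLeftInvariant] (f : E → F) (x : E) (r : ℝ) :
    ∫ y in ball (0 : E) r, f (x + y) ∂μ = ∫ y in ball x r, f y ∂μ := by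
  have h := (measurePreserving_add_left μ x).setIntegral_preimage_emb
    (measurableEmbedding_addLeft x) f (ball x r)
  rwa [preimage_add_left_ball, neg_add_cancel] at h

end Ball

section TaylorLp

variable {E : Type*} [NormedAddCommGroup E] [NormedSpace ℝ E] [MeasurableSpace E] [BorelSpace E]
  [SecondCountableTopology E] {μ : Measure E} [μ.IsAddRightInvariant] [SigmaFinite μ]
  {φ : E → ℝ}

lemma lintegral_Ioc_zero_one_ofReal_one_sub :
    ∫⁻ t in Ioc (0 : ℝ) 1, ENNReal.ofReal (1 - t) = 2⁻¹ := by
  rw [← ofReal_integral_eq_lintegral_ofReal, ← intervalIntegral.integral_of_le zero_le_one,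
    intervalIntegral.integral_sub intervalIntegrable_const intervalIntegral.intervalIntegrable_id,
    integral_id]
  · norm_num
    rw [one_div, ENNReal.ofReal_inv_of_pos two_pos, ENNReal.ofReal_ofNat]
  · exact (continuous_const.sub continuous_id).integrableOn_Ioc
  · filter_upwards [ae_restrict_mem measurableSet_Ioc] with t ht
    exact sub_nonneg.2 ht.2

lemma eLpNorm_sub_sub_fderiv_le (hφ : ContDiff ℝ 2 φ) {q : ℝ≥0∞} (hq : 1 ≤ q) (y : E) :
    eLpNorm (fun x => φ (x + y) - φ x - fderiv ℝ φ x y) q μ ≤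
      2⁻¹ * eLpNorm (fun x => iteratedFDeriv ℝ 2 φ x (fun _ => y)) q μ := by
  set D : E → ℝ := fun x => iteratedFDeriv ℝ 2 φ x (fun _ => y)
  have hD : Continuous D := by
    have := hφ.continuous_iteratedFDeriv (m := 2) le_rfl
    fun_prop
  have h_taylor : (fun x => φ (x + y) - φ x - fderiv ℝ φ x y) =
      fun x => ∫ t in Ioc (0 : ℝ) 1, (1 - t) • D (x + t • y) := by
    ext x
    rw [sub_sub_fderiv_eq_intervalIntegral hφ, intervalIntegral.integral_of_le zero_le_one]
  have h_slice (t : ℝ) (ht : t ∈ Ioc (0 : ℝ) 1) :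
      eLpNorm (fun x => (1 - t) • D (x + t • y)) q μ = ENNReal.ofReal (1 - t) * eLpNorm D q μ := by
    rw [show (fun x => (1 - t) • D (x + t • y)) = (1 - t) • fun x => D (x + t • y) from rfl,
      eLpNorm_const_smul, Real.enorm_eq_ofReal (sub_nonneg.2 ht.2)]
    exact congrArg _ (eLpNorm_comp_measurePreserving (g := D) (f := (· + t • y))
      hD.aestronglyMeasurable (measurePreserving_add_right μ (t • y)))
  rw [h_taylor]
  calc eLpNorm (fun x => ∫ t in Ioc (0 : ℝ) 1, (1 - t) • D (x + t • y)) q μ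
      ≤ ∫⁻ t in Ioc (0 : ℝ) 1, ENNReal.ofReal (1 - t) * eLpNorm D q μ := by
        refine eLpNorm_integral_le_of_ae_eLpNorm_le hq (by fun_prop) (by fun_prop) ?_
        filter_upwards [ae_restrict_mem measurableSet_Ioc] with t ht
        exact (h_slice t ht).le
    _ = 2⁻¹ * eLpNorm D q μ := by
        rw [lintegral_mul_const _ (by fun_prop), lintegral_Ioc_zero_one_ofReal_one_sub]

end TaylorLp

section Euclidean

variable {d : ℕ}

lemma sq_sum_abs_le_card_mul_norm_sq (y : EuclideanSpace ℝ (Fin d)) :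
    (∑ i, |y i|) ^ 2 ≤ d * ‖y‖ ^ 2 := by
  simpa [EuclideanSpace.norm_sq_eq, sq_abs] using
    sq_sum_le_card_mul_sum_sq (s := Finset.univ) (f := fun i => |y i|)

lemma iteratedFDeriv_apply_const_eq_sum_pderiv' (k : ℕ) (φ : EuclideanSpace ℝ (Fin d) → ℝ)
    (x y : EuclideanSpace ℝ (Fin d)) :
    iteratedFDeriv ℝ k φ x (fun _ => y) =
      ∑ idx : Fin k → Fin d, (∏ j, y (idx j)) * pderiv' d k φ idx x := by
  have hy : y = ∑ i, y i • EuclideanSpace.single i (1 : ℝ) := by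
    simpa using ((EuclideanSpace.basisFun (Fin d) ℝ).sum_repr y).symm
  conv_lhs => rw [hy, ContinuousMultilinearMap.map_sum]
  refine Finset.sum_congr rfl fun idx _ => ?_
  rw [ContinuousMultilinearMap.map_smul_univ, smul_eq_mul, pderiv']

lemma eLpNorm_iteratedFDeriv_apply_const_le {k : ℕ} {φ : EuclideanSpace ℝ (Fin d) → ℝ}
    (hφ : ContDiff ℝ k φ) {q : ℝ≥0∞} (hq : 1 ≤ q) (μ : Measure (EuclideanSpace ℝ (Fin d)))
    (y : EuclideanSpace ℝ (Fin d)) :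
    eLpNorm (fun x => iteratedFDeriv ℝ k φ x (fun _ => y)) q μ ≤
      ENNReal.ofReal ((∑ i, |y i|) ^ k) *
        ⨆ idx : Fin k → Fin d, eLpNorm (pderiv' d k φ idx) q μ := by
  set S := ⨆ idx : Fin k → Fin d, eLpNorm (pderiv' d k φ idx) q μ
  have h_cont (idx : Fin k → Fin d) : Continuous (pderiv' d k φ idx) := by
    have := hφ.continuous_iteratedFDeriv (m := k) le_rfl
    unfold pderiv'
    fun_prop
  calc eLpNorm (fun x => iteratedFDeriv ℝ k φ x (fun _ => y)) q μ
      = eLpNorm (∑ idx : Fin k → Fin d, (∏ j, y (idx j)) • pderiv' d k φ idx) q μ := by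
        congr 1
        ext x
        simp [iteratedFDeriv_apply_const_eq_sum_pderiv', Finset.sum_apply]
    _ ≤ ∑ idx : Fin k → Fin d, eLpNorm ((∏ j, y (idx j)) • pderiv' d k φ idx) q μ :=
        eLpNorm_sum_le (fun idx _ => ((h_cont idx).const_smul _).aestronglyMeasurable) hq
    _ ≤ ∑ idx : Fin k → Fin d, ENNReal.ofReal (∏ j, |y (idx j)|) * S := by
        gcongr with idx
        rw [eLpNorm_const_smul, ← Finset.abs_prod, ← Real.enorm_eq_ofReal (abs_nonneg _),
          Real.enorm_abs]
        exact mul_le_mul' le_rfl (le_iSup (fun idx => eLpNorm (pderiv' d k φ idx) q μ) idx)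
    _ = ENNReal.ofReal ((∑ i, |y i|) ^ k) * S := by
        rw [← Finset.sum_mul, ← ENNReal.ofReal_sum_of_nonneg (fun _ _ => by positivity),
          Fintype.sum_pow]

lemma eLpNorm_sub_sub_fderiv_le_pderiv' {φ : EuclideanSpace ℝ (Fin d) → ℝ} (hφ : ContDiff ℝ 2 φ)
    {q : ℝ≥0∞} (hq : 1 ≤ q) (y : EuclideanSpace ℝ (Fin d)) :
    eLpNorm (fun x => φ (x + y) - φ x - fderiv ℝ φ x y) q volume ≤
      ENNReal.ofReal (d / 2 * ‖y‖ ^ 2) *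
        ⨆ idx : Fin 2 → Fin d, eLpNorm (pderiv' d 2 φ idx) q volume := by
  set S := ⨆ idx : Fin 2 → Fin d, eLpNorm (pderiv' d 2 φ idx) q volume
  calc eLpNorm (fun x => φ (x + y) - φ x - fderiv ℝ φ x y) q volume
      ≤ 2⁻¹ * eLpNorm (fun x => iteratedFDeriv ℝ 2 φ x (fun _ => y)) q volume :=
        eLpNorm_sub_sub_fderiv_le hφ hq y
    _ ≤ 2⁻¹ * (ENNReal.ofReal ((∑ i, |y i|) ^ 2) * S) := by
        gcongr
        exact eLpNorm_iteratedFDeriv_apply_const_le hφ hq volume y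
    _ ≤ 2⁻¹ * (ENNReal.ofReal (d * ‖y‖ ^ 2) * S) := by
        gcongr
        exact sq_sum_abs_le_card_mul_norm_sq y
    _ = ENNReal.ofReal (d / 2 * ‖y‖ ^ 2) * S := by
        rw [← mul_assoc, show (2⁻¹ : ℝ≥0∞) = ENNReal.ofReal 2⁻¹ by
          rw [ENNReal.ofReal_inv_of_pos two_pos, ENNReal.ofReal_ofNat], ← ENNReal.ofReal_mul
          (by norm_num)]
        ring_nf

lemma ballAvg_sub_self_eq {φ : EuclideanSpace ℝ (Fin d) → ℝ} (hφ : Continuous φ) {r : ℝ}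
    (hr : 0 < r) (x : EuclideanSpace ℝ (Fin d)) :
    ballAvg d φ x r - φ x = (volume (ball (0 : EuclideanSpace ℝ (Fin d)) r)).toReal⁻¹ *
      ∫ y in ball (0 : EuclideanSpace ℝ (Fin d)) r, (φ (x + y) - φ x - fderiv ℝ φ x y) := by
  unfold ballAvg
  set B := ball (0 : EuclideanSpace ℝ (Fin d)) r
  have hV : (volume B).toReal ≠ 0 :=
    (ENNReal.toReal_pos (measure_ball_pos volume 0 hr).ne' measure_ball_lt_top.ne).ne'
  have h_int {f : EuclideanSpace ℝ (Fin d) → ℝ} (hf : Continuous f) : IntegrableOn f B :=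
    (hf.locallyIntegrable.integrableOn_isCompact (isCompact_closedBall 0 r)).mono_set
      ball_subset_closedBall
  rw [integral_sub (f := fun y => φ (x + y) - φ x) (g := fderiv ℝ φ x)
      ((h_int (by fun_prop)).sub (h_int continuous_const)) (h_int (by fun_prop)),
    integral_sub (h_int (by fun_prop)) (h_int continuous_const),
    setIntegral_ball_zero_eq_zero_of_odd (map_neg _), setIntegral_const,
    setIntegral_ball_zero_comp_add_left, measureReal_def, smul_eq_mul]
  field_simp
  ring

end Euclidean

theorem ball_average_approx_general (d : ℕ) (r : ℝ) (hr : 0 < r)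
    (q : ℝ≥0∞) (hq : 1 ≤ q)
    (φ : EuclideanSpace ℝ (Fin d) → ℝ) (hφ : ContDiff ℝ 2 φ) :
    eLpNorm (fun x => ballAvg d φ x r - φ x) q volume ≤
      ENNReal.ofReal ((d : ℝ) / 2 * r ^ 2) *
        ⨆ idx : Fin 2 → Fin d, eLpNorm (pderiv' d 2 φ idx) q volume := by
  set B := ball (0 : EuclideanSpace ℝ (Fin d)) r
  set C := ENNReal.ofReal ((d : ℝ) / 2 * r ^ 2) *
    ⨆ idx : Fin 2 → Fin d, eLpNorm (pderiv' d 2 φ idx) q volume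
  have h_bound : ∀ᵐ y ∂volume.restrict B,
      eLpNorm (fun x => φ (x + y) - φ x - fderiv ℝ φ x y) q volume ≤ C := by
    filter_upwards [ae_restrict_mem measurableSet_ball] with y hy
    refine (eLpNorm_sub_sub_fderiv_le_pderiv' hφ hq y).trans
      (mul_le_mul' (ENNReal.ofReal_le_ofReal ?_) le_rfl)
    gcongr
    exact (mem_ball_zero_iff.1 hy).le
  have h_meas : Measurable (uncurry fun x y => φ (x + y) - φ x - fderiv ℝ φ x y) := by
    have := hφ.continuous
    have := hφ.continuous_fderiv two_ne_zero
    exact Continuous.measurable (by fun_prop)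
  calc eLpNorm (fun x => ballAvg d φ x r - φ x) q volume
      = ‖(volume B).toReal⁻¹‖ₑ *
          eLpNorm (fun x => ∫ y in B, (φ (x + y) - φ x - fderiv ℝ φ x y)) q volume := by
        rw [← eLpNorm_const_smul]
        congr 1
        ext x
        rw [ballAvg_sub_self_eq hφ.continuous hr, Pi.smul_apply, smul_eq_mul]
    _ ≤ ‖(volume B).toReal⁻¹‖ₑ * ∫⁻ _ in B, C :=
        mul_le_mul' le_rfl (eLpNorm_integral_le_of_ae_eLpNorm_le hq h_meas measurable_const h_bound)
    _ = C := by
        rw [setLIntegral_const, ENNReal.enorm_inv_toReal_mul_mul_cancel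
          (measure_ball_pos volume 0 hr).ne' measure_ball_lt_top.ne]

theorem ball_average_approx (d : ℕ) (hd : 1 ≤ d) (r : ℝ) (hr : 0 < r)
    (q : ℝ≥0∞) (hq : 1 ≤ q)
    (φ : EuclideanSpace ℝ (Fin d) → ℝ) (hφ : ContDiff ℝ 2 φ)
    (hfin : ∀ k : ℕ, k ≤ 2 → ∀ idx : Fin k → Fin d,
      eLpNorm (pderiv' d k φ idx) q volume < ⊤) :
    eLpNorm (fun x => ballAvg d φ x r - φ x) q volume ≤
      ENNReal.ofReal ((d : ℝ) / 2 * r ^ 2) *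
        ⨆ idx : Fin 2 → Fin d, eLpNorm (pderiv' d 2 φ idx) q volume :=
  ball_average_approx_general d r hr q hq φ hφ
end

section
/- Let d ≥ 1, r > 0 and x ∈ ℝ^d. Then ∫_{ℝ^d} ∫_{ℝ^d} |y − x|² · 1_{|x−z| < r} · 1_{|y−z| < r} dz dy = (2d/(d+2)) · r² · V_r². -/
/-!
After swapping the order of integration, the inner integral is `∫_{B(z,r)} |y - x|² dy` for
`z ∈ B(x,r)`. Translating to the centred ball and expanding the square, the cross term
`∫_{B(0,r)} ⟪v, z - x⟫ dv` vanishes by the symmetry `v ↦ -v`, leaving `M + |z - x|² V_r`,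
where `M = ∫_{B(0,r)} |v|² dv = d/(d+2) r² V_r` by polar coordinates. Integrating over
`z ∈ B(x,r)` gives `M V_r + V_r M`.
-/

open MeasureTheory Metric Module
open scoped RealInnerProductSpace

theorem integral_Ioi_pow_mul_indicator_Iio_sq {n : ℕ} (hn : 1 ≤ n) {r : ℝ} (hr : 0 < r) :
    ∫ t in Set.Ioi (0 : ℝ), t ^ (n - 1) • (Set.Iio r).indicator (fun t => t ^ 2) t =
      r ^ (n + 2) / (n + 2) := by
  have hpow : ∀ t : ℝ, t ^ (n - 1) • (Set.Iio r).indicator (fun t => t ^ 2) t =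
      (Set.Iio r).indicator (fun t => t ^ (n + 1)) t := by
    intro t
    by_cases ht : t ∈ Set.Iio r
    · rw [Set.indicator_of_mem ht, Set.indicator_of_mem ht, smul_eq_mul, ← pow_add]
      congr 1
      omega
    · simp [ht]
  simp_rw [hpow]
  rw [setIntegral_indicator measurableSet_Iio, Set.Ioi_inter_Iio, ← integral_Ioc_eq_integral_Ioo,
    ← intervalIntegral.integral_of_le hr.le, integral_pow]
  push_cast
  ring

theorem Continuous.integrableOn_ball {X : Type*} [MetricSpace X] [ProperSpace X]
    [MeasurableSpace X] [OpensMeasurableSpace X] {μ : Measure X} [IsFiniteMeasureOnCompacts μ]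
    {f : X → ℝ} (hf : Continuous f) (z : X) (r : ℝ) : IntegrableOn f (ball z r) μ :=
  (hf.continuousOn.integrableOn_compact (isCompact_closedBall z r)).mono_set ball_subset_closedBall

section NormedAddCommGroup

variable {E : Type*} [NormedAddCommGroup E]

theorem norm_sub_sq_mul_indicator_ball_mul_indicator_ball (x y z : E) (r : ℝ) :
    ‖y - x‖ ^ 2 * (ball x r).indicator (fun _ => (1 : ℝ)) z *
        (ball y r).indicator (fun _ => (1 : ℝ)) z =
      {p : E × E | p.2 ∈ ball x r ∧ p.2 ∈ ball p.1 r}.indicator (fun p => ‖p.1 - x‖ ^ 2)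
        (y, z) := by
  by_cases hx : z ∈ ball x r <;> by_cases hy : z ∈ ball y r <;>
    simp [hx, hy, -mem_ball]

variable [MeasurableSpace E] [BorelSpace E] (μ : Measure E)

theorem setIntegral_ball_eq_setIntegral_ball_zero_comp_add_right [μ.IsAddRightInvariant]
    (f : E → ℝ) (z : E) (r : ℝ) :
    ∫ y in ball z r, f y ∂μ = ∫ v in ball (0 : E) r, f (v + z) ∂μ := by
  simpa using ((measurePreserving_add_right μ z).setIntegral_preimage_emb
    (measurableEmbedding_addRight z) f (ball z r)).symm

theorem integral_norm_sub_sq_mul_indicator_ball_mul_indicator_ball (x z : E) (r : ℝ) :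
    ∫ y, ‖y - x‖ ^ 2 * (ball x r).indicator (fun _ => (1 : ℝ)) z *
        (ball y r).indicator (fun _ => (1 : ℝ)) z ∂μ =
      (ball x r).indicator (fun z => ∫ y in ball z r, ‖y - x‖ ^ 2 ∂μ) z := by
  by_cases hz : z ∈ ball x r
  · simp only [Set.indicator_of_mem hz, mul_one]
    rw [← integral_indicator measurableSet_ball]
    congr 1 with y
    by_cases hy : y ∈ ball z r
    · simp [hy, mem_ball_comm.1 hy]
    · simp [hy, mt mem_ball_comm.1 hy]
  · simp [hz]

theorem integrable_norm_sub_sq_mul_indicator_ball_mul_indicator_ball [ProperSpace E]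
    [SecondCountableTopology E] [SFinite μ] [IsFiniteMeasureOnCompacts μ] (x : E) (r : ℝ) :
    Integrable (fun p : E × E =>
      ‖p.1 - x‖ ^ 2 * (ball x r).indicator (fun _ => (1 : ℝ)) p.2 *
        (ball p.1 r).indicator (fun _ => (1 : ℝ)) p.2) (μ.prod μ) := by
  set S := {p : E × E | p.2 ∈ ball x r ∧ p.2 ∈ ball p.1 r}
  have hS_open : IsOpen S := by
    refine (isOpen_ball.preimage continuous_snd).inter (isOpen_lt ?_ continuous_const)
    fun_prop
  have hS_sub : S ⊆ closedBall x (2 * r) ×ˢ closedBall x r := by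
    rintro ⟨y, z⟩ ⟨hzx, hzy⟩
    refine ⟨mem_closedBall.2 ?_, ball_subset_closedBall hzx⟩
    linarith [dist_triangle_left y x z, mem_ball.1 hzx, mem_ball.1 hzy]
  simp_rw [norm_sub_sq_mul_indicator_ball_mul_indicator_ball]
  rw [integrable_indicator_iff hS_open.measurableSet]
  exact (ContinuousOn.integrableOn_compact ((isCompact_closedBall x _).prod
    (isCompact_closedBall x _)) (by fun_prop)).mono_set hS_sub

end NormedAddCommGroup

theorem setIntegral_norm_sq_ball_zero {E : Type*} [NormedAddCommGroup E] [NormedSpace ℝ E]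
    [FiniteDimensional ℝ E] [MeasurableSpace E] [BorelSpace E] (μ : Measure E)
    [μ.IsAddHaarMeasure] (r : ℝ) :
    ∫ v in ball (0 : E) r, ‖v‖ ^ 2 ∂μ =
      finrank ℝ E / (finrank ℝ E + 2) * r ^ 2 * μ.real (ball 0 r) := by
  nontriviality E
  rcases le_or_gt r 0 with hr | hr
  · simp [ball_eq_empty.2 hr]
  have hradial : ∫ v in ball (0 : E) r, ‖v‖ ^ 2 ∂μ =
      ∫ v, (Set.Iio r).indicator (fun t => t ^ 2) ‖v‖ ∂μ := by
    rw [← integral_indicator measurableSet_ball]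
    congr 1 with v
    by_cases hv : ‖v‖ < r <;> simp [hv]
  rw [hradial, integral_fun_norm_addHaar, integral_Ioi_pow_mul_indicator_Iio_sq finrank_pos hr]
  have hr_pow : (0 : ℝ) ≤ r ^ finrank ℝ E := by positivity
  simp only [measureReal_def, Measure.addHaar_ball_of_pos μ 0 hr, ENNReal.toReal_mul,
    ENNReal.toReal_ofReal hr_pow, nsmul_eq_mul, smul_eq_mul]
  field_simp
  ring

section InnerProductSpace

variable {E : Type*} [NormedAddCommGroup E] [InnerProductSpace ℝ E] [MeasurableSpace E]
  [BorelSpace E] (μ : Measure E)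

theorem setIntegral_inner_ball_zero [μ.IsNegInvariant] (r : ℝ) (c : E) :
    ∫ v in ball (0 : E) r, ⟪v, c⟫ ∂μ = 0 := by
  have h := (Measure.measurePreserving_neg μ).setIntegral_preimage_emb measurableEmbedding_neg
    (fun v => ⟪v, c⟫) (ball 0 r)
  simp [inner_neg_left, integral_neg] at h
  linarith

variable [FiniteDimensional ℝ E] [μ.IsAddHaarMeasure]

theorem setIntegral_norm_sub_sq_ball (x z : E) (r : ℝ) :
    ∫ y in ball z r, ‖y - x‖ ^ 2 ∂μ =
      ∫ v in ball (0 : E) r, ‖v‖ ^ 2 ∂μ + ‖z - x‖ ^ 2 * μ.real (ball 0 r) := by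
  have hexpand :
      ∀ v : E, ‖v + z - x‖ ^ 2 = ‖v‖ ^ 2 + (2 * ⟪v, z - x⟫ + ‖z - x‖ ^ 2) := by
    intro v
    rw [add_sub_assoc, norm_add_sq_real]
    ring
  rw [setIntegral_ball_eq_setIntegral_ball_zero_comp_add_right μ (fun y => ‖y - x‖ ^ 2)]
  simp_rw [hexpand]
  rw [integral_add (Continuous.integrableOn_ball ?_ _ _) (Continuous.integrableOn_ball ?_ _ _),
    integral_add (Continuous.integrableOn_ball ?_ _ _) (integrableOn_const measure_ball_lt_top.ne),
    integral_const_mul, setIntegral_inner_ball_zero, setIntegral_const, smul_eq_mul]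
  · ring
  all_goals fun_prop

theorem integral_integral_norm_sub_sq_mul_indicator_ball_mul_indicator_ball (x : E) (r : ℝ) :
    ∫ y, ∫ z, ‖y - x‖ ^ 2 * (ball x r).indicator (fun _ => (1 : ℝ)) z *
        (ball y r).indicator (fun _ => (1 : ℝ)) z ∂μ ∂μ =
      2 * finrank ℝ E / (finrank ℝ E + 2) * r ^ 2 * μ.real (ball 0 r) ^ 2 := by
  set M := ∫ v in ball (0 : E) r, ‖v‖ ^ 2 ∂μ
  set V := μ.real (ball (0 : E) r)
  calc _ = ∫ z, ∫ y, ‖y - x‖ ^ 2 * (ball x r).indicator (fun _ => (1 : ℝ)) z *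
        (ball y r).indicator (fun _ => (1 : ℝ)) z ∂μ ∂μ :=
        integral_integral_swap (integrable_norm_sub_sq_mul_indicator_ball_mul_indicator_ball μ x r)
    _ = ∫ z in ball x r, (M + ‖z - x‖ ^ 2 * V) ∂μ := by
        simp_rw [integral_norm_sub_sq_mul_indicator_ball_mul_indicator_ball,
          setIntegral_norm_sub_sq_ball μ x]
        rw [integral_indicator measurableSet_ball]
    _ = M * V + (∫ z in ball x r, ‖z - x‖ ^ 2 ∂μ) * V := by
        rw [integral_add (integrableOn_const measure_ball_lt_top.ne).integrable
            (Continuous.integrableOn_ball ?_ _ _), integral_mul_const, setIntegral_const,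
          smul_eq_mul, Measure.addHaar_real_ball_center]
        · ring
        · fun_prop
    _ = 2 * M * V := by
        rw [setIntegral_norm_sub_sq_ball μ x x]
        simp only [sub_self, norm_zero]
        ring
    _ = _ := by
        rw [show M = _ from setIntegral_norm_sq_ball_zero μ r]
        ring

end InnerProductSpace

theorem second_moment_double_ball_general (d : ℕ) (r : ℝ)
    (x : EuclideanSpace ℝ (Fin d)) :
    ∫ y : EuclideanSpace ℝ (Fin d), ∫ z : EuclideanSpace ℝ (Fin d),
        ‖y - x‖ ^ 2 * Set.indicator (ball x r) (fun _ => (1 : ℝ)) z *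
          Set.indicator (ball y r) (fun _ => (1 : ℝ)) z =
      2 * (d : ℝ) / ((d : ℝ) + 2) * r ^ 2 *
        ((volume (ball (0 : EuclideanSpace ℝ (Fin d)) r)).toReal) ^ 2 := by
  rw [integral_integral_norm_sub_sq_mul_indicator_ball_mul_indicator_ball,
    finrank_euclideanSpace_fin, measureReal_def]

theorem second_moment_double_ball (d : ℕ) (hd : 1 ≤ d) (r : ℝ) (hr : 0 < r)
    (x : EuclideanSpace ℝ (Fin d)) :
    ∫ y : EuclideanSpace ℝ (Fin d), ∫ z : EuclideanSpace ℝ (Fin d),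
        ‖y - x‖ ^ 2 * Set.indicator (ball x r) (fun _ => (1 : ℝ)) z *
          Set.indicator (ball y r) (fun _ => (1 : ℝ)) z =
      2 * (d : ℝ) / ((d : ℝ) + 2) * r ^ 2 *
        ((volume (ball (0 : EuclideanSpace ℝ (Fin d)) r)).toReal) ^ 2 :=
  second_moment_double_ball_general d r x
end

section
/- Let d ≥ 1 and α ∈ (0, min(2,d)). Let F : ℝ → ℝ be twice continuously differentiable with F, F' and F'' bounded. There exists a constant C > 0, depending only on d, α and the supremum norms of F, F' and F'', such that for every δ ∈ (0,1] and every twice continuously differentiable φ : ℝ^d → [0,1] with bounded first and second partial derivatives, sup_{x∈ℝ^d} |F^{(δ)}(φ)(x) − F(φ(x))| ≤ C · δ^α · (1 + max_{|β|=1} ‖∂_β φ‖_∞² + max_{|β|=2} ‖∂_β φ‖_∞). -/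
open MeasureTheory Metric

/-- `F^{(δ)}(φ)(x) = α ∫_1^∞ ⟨F(⟨φ⟩(·,δr))⟩(x,δr) r^{-(1+α)} dr`. -/
noncomputable def Fdelta (d : ℕ) (α δ : ℝ) (F : ℝ → ℝ)
    (φ : EuclideanSpace ℝ (Fin d) → ℝ) (x : EuclideanSpace ℝ (Fin d)) : ℝ :=
  α * ∫ r in Set.Ioi (1 : ℝ),
    ballAvg d (fun y => F (ballAvg d φ y (δ * r))) x (δ * r) * r ^ (-(1 + α))

open Set Function

/-!
Averaging a `C²` function over a ball of radius `s` moves it by `O(s² ‖D²g‖)`, because the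
first-order Taylor term averages to zero by symmetry of the ball. Applying this to `φ` and to
`F ∘ φ`, and using that `F` is Lipschitz, the double average `⟨F(⟨φ⟩(·,s))⟩(x,s)` lies within
`O(s² (‖Dφ‖² + ‖D²φ‖))` of `F(φ x)`; it also lies within `2‖F‖_∞` of it. Integrating the minimum
of the two bounds at `s = δr` against `α r^{-(1+α)} dr` on `(1, ∞)`, split at `r = δ⁻¹`, gives
`O(δ^α)` since `0 < α < 2`.
-/

theorem norm_sub_sub_fderiv_le {E F : Type*} [NormedAddCommGroup E] [NormedSpace ℝ E]
    [NormedAddCommGroup F] [NormedSpace ℝ F] {g : E → F} (hg : Differentiable ℝ g) {x : E}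
    {K : ℝ} (hK0 : 0 ≤ K) (hK : ∀ y, ‖fderiv ℝ g y - fderiv ℝ g x‖ ≤ K * ‖y - x‖) (y : E) :
    ‖g y - g x - fderiv ℝ g x (y - x)‖ ≤ K * ‖y - x‖ ^ 2 := by
  have hbound : ∀ z ∈ closedBall x ‖y - x‖, ‖fderiv ℝ g z - fderiv ℝ g x‖ ≤ K * ‖y - x‖ :=
    fun z hz => (hK z).trans (mul_le_mul_of_nonneg_left (mem_closedBall_iff_norm.1 hz) hK0)
  have := (convex_closedBall x ‖y - x‖).norm_image_sub_le_of_norm_fderiv_le' (fun z _ => hg z)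
    hbound (mem_closedBall_self (norm_nonneg _)) (mem_closedBall_iff_norm.2 le_rfl)
  linarith

theorem fderiv_comp_eq_deriv_smul {E : Type*} [NormedAddCommGroup E] [NormedSpace ℝ E]
    {F : ℝ → ℝ} {φ : E → ℝ} (hF : Differentiable ℝ F) (hφ : Differentiable ℝ φ) (y : E) :
    fderiv ℝ (F ∘ φ) y = deriv F (φ y) • fderiv ℝ φ y :=
  ((hF (φ y)).hasDerivAt.comp_hasFDerivAt y (hφ y).hasFDerivAt).fderiv

theorem norm_fderiv_comp_sub_le {E : Type*} [NormedAddCommGroup E] [NormedSpace ℝ E]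
    {F : ℝ → ℝ} {φ : E → ℝ} (hF : Differentiable ℝ F) (hφ : Differentiable ℝ φ) {M L₁ L₂ : ℝ}
    (hF' : ∀ a, |deriv F a| ≤ M) (hF'' : ∀ a b, |deriv F a - deriv F b| ≤ M * |a - b|)
    (hφ' : ∀ y, ‖fderiv ℝ φ y‖ ≤ L₁)
    (hφ'' : ∀ y z, ‖fderiv ℝ φ y - fderiv ℝ φ z‖ ≤ L₂ * ‖y - z‖) (y z : E) :
    ‖fderiv ℝ (F ∘ φ) y - fderiv ℝ (F ∘ φ) z‖ ≤ M * (L₁ ^ 2 + L₂) * ‖y - z‖ := by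
  have hM : 0 ≤ M := (abs_nonneg _).trans (hF' 0)
  have hφlip : |φ y - φ z| ≤ L₁ * ‖y - z‖ :=
    convex_univ.norm_image_sub_le_of_norm_fderiv_le (fun w _ => hφ w) (fun w _ => hφ' w)
      (mem_univ z) (mem_univ y)
  rw [fderiv_comp_eq_deriv_smul hF hφ, fderiv_comp_eq_deriv_smul hF hφ,
    show ∀ (a b : ℝ) (A B : E →L[ℝ] ℝ), a • A - b • B = (a - b) • A + b • (A - B) by
      intros; module]
  calc _ ≤ |deriv F (φ y) - deriv F (φ z)| * ‖fderiv ℝ φ y‖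
        + |deriv F (φ z)| * ‖fderiv ℝ φ y - fderiv ℝ φ z‖ :=
        (norm_add_le _ _).trans_eq <| by
          rw [norm_smul, norm_smul, Real.norm_eq_abs, Real.norm_eq_abs]
    _ ≤ (M * (L₁ * ‖y - z‖)) * L₁ + M * (L₂ * ‖y - z‖) := by
        have hL₁ : 0 ≤ L₁ := (norm_nonneg _).trans (hφ' y)
        refine add_le_add (mul_le_mul ?_ (hφ' y) (norm_nonneg _) (by positivity))
          (mul_le_mul (hF' _) (hφ'' y z) (norm_nonneg _) hM)
        exact (hF'' _ _).trans (mul_le_mul_of_nonneg_left hφlip hM)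
    _ = M * (L₁ ^ 2 + L₂) * ‖y - z‖ := by ring

section Radial

variable {α δ : ℝ}

theorem integral_Ioi_rpow_neg_one_sub (hα : 0 < α) {b : ℝ} (hb : 0 < b) :
    ∫ r in Ioi b, r ^ (-(1 + α)) = b ^ (-α) / α := by
  rw [integral_Ioi_rpow_of_lt (by linarith) hb, show -(1 + α) + 1 = -α by ring, neg_div_neg_eq]

theorem integral_Ioc_one_rpow_one_sub_le (hα : α < 2) {b : ℝ} (hb : 1 ≤ b) :
    ∫ r in Ioc 1 b, r ^ (1 - α) ≤ b ^ (2 - α) / (2 - α) := by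
  rw [← intervalIntegral.integral_of_le hb, integral_rpow (Or.inl (by linarith)),
    show 1 - α + 1 = 2 - α by ring, Real.one_rpow]
  exact div_le_div_of_nonneg_right (by linarith) (by linarith)

theorem abs_setIntegral_Ioi_one_le (hα0 : 0 < α) (hα2 : α < 2) (hδ0 : 0 < δ) (hδ1 : δ ≤ 1)
    {A B : ℝ} (hA : 0 ≤ A) {k : ℝ → ℝ} (hk : IntegrableOn k (Ioi 1))
    (hkA : ∀ r ∈ Ioi (1 : ℝ), |k r| ≤ A * δ ^ 2 * r ^ (1 - α))
    (hkB : ∀ r ∈ Ioi (1 : ℝ), |k r| ≤ B * r ^ (-(1 + α))) :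
    |∫ r in Ioi 1, k r| ≤ (A / (2 - α) + B / α) * δ ^ α := by
  set b := δ⁻¹
  have hb : 1 ≤ b := (one_le_inv₀ hδ0).2 hδ1
  have hb0 : 0 < b := by positivity
  have hpow : δ ^ 2 * b ^ (2 - α) = δ ^ α := by
    rw [Real.inv_rpow hδ0.le, ← Real.rpow_neg hδ0.le, ← Real.rpow_natCast, ← Real.rpow_add hδ0]
    norm_num
  have hnear : ‖∫ r in Ioc 1 b, k r‖ ≤ A * δ ^ α / (2 - α) := by
    have hint : IntegrableOn (fun r : ℝ => r ^ (1 - α)) (Ioc 1 b) := by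
      have := intervalIntegral.intervalIntegrable_rpow' (a := 1) (b := b)
        (show (-1 : ℝ) < 1 - α by linarith)
      rwa [intervalIntegrable_iff, uIoc_of_le hb] at this
    calc ‖∫ r in Ioc 1 b, k r‖ ≤ ∫ r in Ioc 1 b, A * δ ^ 2 * r ^ (1 - α) :=
          norm_integral_le_of_norm_le (hint.const_mul _)
            (ae_restrict_of_forall_mem measurableSet_Ioc fun r hr => hkA r hr.1)
      _ = A * δ ^ 2 * ∫ r in Ioc 1 b, r ^ (1 - α) := integral_const_mul _ _
      _ ≤ A * δ ^ 2 * (b ^ (2 - α) / (2 - α)) := by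
          gcongr; exact integral_Ioc_one_rpow_one_sub_le hα2 hb
      _ = A * δ ^ α / (2 - α) := by rw [← hpow]; ring
  have hfar : ‖∫ r in Ioi b, k r‖ ≤ B * δ ^ α / α := by
    calc ‖∫ r in Ioi b, k r‖ ≤ ∫ r in Ioi b, B * r ^ (-(1 + α)) :=
          norm_integral_le_of_norm_le
            ((integrableOn_Ioi_rpow_of_lt (show -(1 + α) < -1 by linarith) hb0).const_mul B)
            (ae_restrict_of_forall_mem measurableSet_Ioi fun r hr => hkB r (hb.trans_lt hr))
      _ = B * δ ^ α / α := by
          rw [integral_const_mul, integral_Ioi_rpow_neg_one_sub hα0 hb0, Real.inv_rpow hδ0.le,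
            ← Real.rpow_neg hδ0.le, neg_neg, mul_div_assoc]
  rw [← Real.norm_eq_abs, ← Ioc_union_Ioi_eq_Ioi hb,
    setIntegral_union Ioc_disjoint_Ioi_same measurableSet_Ioi (hk.mono_set Ioc_subset_Ioi_self)
      (hk.mono_set (Ioi_subset_Ioi hb))]
  calc _ ≤ ‖∫ r in Ioc 1 b, k r‖ + ‖∫ r in Ioi b, k r‖ := norm_add_le _ _
    _ ≤ A * δ ^ α / (2 - α) + B * δ ^ α / α := add_le_add hnear hfar
    _ = (A / (2 - α) + B / α) * δ ^ α := by ring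

theorem abs_mul_setIntegral_rpow_sub_le (hα0 : 0 < α) (hα2 : α < 2) (hδ0 : 0 < δ)
    (hδ1 : δ ≤ 1) {A B c : ℝ} (hA : 0 ≤ A) {h : ℝ → ℝ}
    (hh : AEStronglyMeasurable h (volume.restrict (Ioi 1)))
    (hhA : ∀ r ∈ Ioi (1 : ℝ), |h r - c| ≤ A * (δ * r) ^ 2)
    (hhB : ∀ r ∈ Ioi (1 : ℝ), |h r - c| ≤ B) :
    |α * (∫ r in Ioi 1, h r * r ^ (-(1 + α))) - c| ≤ (α * A / (2 - α) + B) * δ ^ α := by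
  have hw : IntegrableOn (fun r : ℝ => r ^ (-(1 + α))) (Ioi 1) :=
    integrableOn_Ioi_rpow_of_lt (by linarith) one_pos
  have hw0 : ∀ r ∈ Ioi (1 : ℝ), 0 ≤ r ^ (-(1 + α)) :=
    fun r hr => Real.rpow_nonneg (zero_le_one.trans hr.le) _
  have hk : IntegrableOn (fun r => (h r - c) * r ^ (-(1 + α))) (Ioi 1) := by
    refine Integrable.mono' (hw.const_mul B)
      ((hh.sub aestronglyMeasurable_const).mul hw.aestronglyMeasurable) ?_
    filter_upwards [ae_restrict_mem measurableSet_Ioi] with r hr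
    rw [norm_mul, Real.norm_eq_abs, Real.norm_of_nonneg (hw0 r hr)]
    exact mul_le_mul_of_nonneg_right (hhB r hr) (hw0 r hr)
  have hcentre : α * (∫ r in Ioi 1, h r * r ^ (-(1 + α))) - c =
      α * ∫ r in Ioi 1, (h r - c) * r ^ (-(1 + α)) := by
    have hsum : ∫ r in Ioi 1, h r * r ^ (-(1 + α)) =
        (∫ r in Ioi 1, (h r - c) * r ^ (-(1 + α))) + ∫ r in Ioi 1, c * r ^ (-(1 + α)) := by
      rw [← integral_add hk (hw.const_mul c)]
      congr 1 with r
      ring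
    rw [hsum, integral_const_mul,
      integral_Ioi_rpow_neg_one_sub hα0 one_pos, Real.one_rpow]
    field_simp
    ring
  have hkA : ∀ r ∈ Ioi (1 : ℝ), |(h r - c) * r ^ (-(1 + α))| ≤ A * δ ^ 2 * r ^ (1 - α) := by
    intro r hr
    have hr0 : 0 < r := zero_lt_one.trans hr
    rw [abs_mul, abs_of_nonneg (hw0 r hr),
      show r ^ (1 - α) = r ^ (2 : ℕ) * r ^ (-(1 + α)) by
        rw [← Real.rpow_natCast, ← Real.rpow_add hr0]; congr 1; push_cast; ring]
    calc _ ≤ A * (δ * r) ^ 2 * r ^ (-(1 + α)) := mul_le_mul_of_nonneg_right (hhA r hr) (hw0 r hr)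
      _ = _ := by ring
  have hkB : ∀ r ∈ Ioi (1 : ℝ), |(h r - c) * r ^ (-(1 + α))| ≤ B * r ^ (-(1 + α)) := by
    intro r hr
    rw [abs_mul, abs_of_nonneg (hw0 r hr)]
    exact mul_le_mul_of_nonneg_right (hhB r hr) (hw0 r hr)
  rw [hcentre, abs_mul, abs_of_pos hα0]
  calc _ ≤ α * ((A / (2 - α) + B / α) * δ ^ α) :=
        mul_le_mul_of_nonneg_left (abs_setIntegral_Ioi_one_le hα0 hα2 hδ0 hδ1 hA hk hkA hkB)
          hα0.le
    _ = (α * A / (2 - α) + B) * δ ^ α := by field_simp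

end Radial

section Euclidean

variable {d : ℕ}

local notation "Ed" => EuclideanSpace ℝ (Fin d)

theorem ContinuousLinearMap.norm_le_of_norm_apply_single_le {W : Type*} [NormedAddCommGroup W]
    [NormedSpace ℝ W] (L : Ed →L[ℝ] W) {S : ℝ} (hS : 0 ≤ S)
    (h : ∀ i, ‖L (EuclideanSpace.single i 1)‖ ≤ S) : ‖L‖ ≤ d * S := by
  refine L.opNorm_le_bound (by positivity) fun u => ?_
  have hu : L u = ∑ i, u i • L (EuclideanSpace.single i 1) := by
    conv_lhs => rw [← (EuclideanSpace.basisFun (Fin d) ℝ).sum_repr u]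
    simp [map_sum, map_smul]
  calc ‖L u‖ ≤ ∑ i, ‖u i • L (EuclideanSpace.single i 1)‖ := hu ▸ norm_sum_le _ _
    _ ≤ ∑ _i : Fin d, ‖u‖ * S := by
        gcongr with i
        rw [norm_smul]
        exact mul_le_mul (PiLp.norm_apply_le u i) (h i) (norm_nonneg _) (norm_nonneg _)
    _ = d * S * ‖u‖ := by
        rw [Finset.sum_const, Finset.card_univ, Fintype.card_fin, nsmul_eq_mul]; ring

theorem pderiv'_one (φ : Ed → ℝ) (i : Fin d) (y : Ed) :
    pderiv' d 1 φ (fun _ => i) y = fderiv ℝ φ y (EuclideanSpace.single i 1) := by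
  rw [pderiv', iteratedFDeriv_one_apply]

theorem pderiv'_two (φ : Ed → ℝ) (i j : Fin d) (y : Ed) :
    pderiv' d 2 φ ![i, j] y =
      fderiv ℝ (fderiv ℝ φ) y (EuclideanSpace.single i 1) (EuclideanSpace.single j 1) := by
  rw [pderiv', iteratedFDeriv_two_apply]
  rfl

theorem abs_pderiv'_le_iSup {k : ℕ} {φ : Ed → ℝ} {idx : Fin k → Fin d}
    (h : BddAbove (range fun y => |pderiv' d k φ idx y|)) (y : Ed) :
    |pderiv' d k φ idx y| ≤ ⨆ idx, ⨆ y, |pderiv' d k φ idx y| :=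
  (le_ciSup h y).trans
    (le_ciSup (f := fun idx => ⨆ y, |pderiv' d k φ idx y|) (finite_range _).bddAbove idx)

theorem norm_fderiv_le_of_abs_pderiv'_le {φ : Ed → ℝ} {S : ℝ} (hS : 0 ≤ S)
    (h : ∀ i y, |pderiv' d 1 φ (fun _ => i) y| ≤ S) (y : Ed) : ‖fderiv ℝ φ y‖ ≤ d * S :=
  (fderiv ℝ φ y).norm_le_of_norm_apply_single_le hS fun i => by
    rw [Real.norm_eq_abs, ← pderiv'_one]; exact h i y

theorem norm_fderiv_fderiv_le_of_abs_pderiv'_le {φ : Ed → ℝ} {S : ℝ} (hS : 0 ≤ S)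
    (h : ∀ i j y, |pderiv' d 2 φ ![i, j] y| ≤ S) (y : Ed) :
    ‖fderiv ℝ (fderiv ℝ φ) y‖ ≤ d * (d * S) :=
  (fderiv ℝ (fderiv ℝ φ) y).norm_le_of_norm_apply_single_le (by positivity) fun i =>
    ContinuousLinearMap.norm_le_of_norm_apply_single_le _ hS fun j => by
      rw [Real.norm_eq_abs, ← pderiv'_two]; exact h i j y

theorem measureReal_ball_pos (x : Ed) {s : ℝ} (hs : 0 < s) :
    0 < volume.real (ball x s) :=
  ENNReal.toReal_pos (measure_ball_pos volume x hs).ne' measure_ball_lt_top.ne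

theorem ballAvg_eq (g : Ed → ℝ) (x : Ed) (s : ℝ) :
    ballAvg d g x s = (volume.real (ball x s))⁻¹ * ∫ y in ball x s, g y := by
  rw [ballAvg, measureReal_def, Measure.addHaar_ball_center volume x]

theorem Continuous.integrableOn_ball_s5 {g : Ed → ℝ} (hg : Continuous g) (x : Ed) (s : ℝ) :
    IntegrableOn g (ball x s) :=
  (hg.continuousOn.integrableOn_compact (isCompact_closedBall x s)).mono_set ball_subset_closedBall

theorem ballAvg_sub {f g : Ed → ℝ} {x : Ed} {s : ℝ} (hf : IntegrableOn f (ball x s))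
    (hg : IntegrableOn g (ball x s)) :
    ballAvg d (fun y => f y - g y) x s = ballAvg d f x s - ballAvg d g x s := by
  simp only [ballAvg, integral_sub hf hg, mul_sub]

theorem ballAvg_const (c : ℝ) (x : Ed) {s : ℝ} (hs : 0 < s) : ballAvg d (fun _ => c) x s = c := by
  rw [ballAvg_eq, setIntegral_const, smul_eq_mul,
    inv_mul_cancel_left₀ (measureReal_ball_pos x hs).ne']

theorem abs_ballAvg_le {g : Ed → ℝ} {x : Ed} {s C : ℝ} (hs : 0 < s)
    (hg : ∀ y ∈ ball x s, |g y| ≤ C) : |ballAvg d g x s| ≤ C := by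
  have hV := measureReal_ball_pos x hs
  have hI : ‖∫ y in ball x s, g y‖ ≤ C * volume.real (ball x s) :=
    norm_setIntegral_le_of_norm_le_const measure_ball_lt_top hg
  rw [Real.norm_eq_abs] at hI
  rw [ballAvg_eq, abs_mul, abs_inv, abs_of_pos hV, inv_mul_le_iff₀ hV]
  linarith

/-- The reflection `y ↦ 2x - y` preserves the ball and flips the sign of the integrand. -/
theorem ballAvg_linear_sub_center_eq_zero (L : Ed →L[ℝ] ℝ) (x : Ed) (s : ℝ) :
    ballAvg d (fun y => L (y - x)) x s = 0 := by
  set g := (ball x s).indicator fun y => L (y - x)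
  have hodd : ∀ y, g ((x + x) - y) = -g y := by
    intro y
    have hmem : (x + x) - y ∈ ball x s ↔ y ∈ ball x s := by
      simp only [mem_ball, dist_eq_norm, show x + x - y - x = -(y - x) by abel, norm_neg]
    by_cases hy : y ∈ ball x s
    · simp only [g, indicator_of_mem hy, indicator_of_mem (hmem.2 hy), ← map_neg]
      congr 1
      abel
    · simp [g, hy, mt hmem.1 hy]
  have hzero : ∫ y, g y = 0 := by
    have h := integral_sub_left_eq_self g volume (x + x)
    simp only [hodd, integral_neg] at h
    linarith
  rw [ballAvg, ← integral_indicator measurableSet_ball, hzero, mul_zero]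

theorem abs_ballAvg_sub_le_of_taylor {g : Ed → ℝ} (hg : Continuous g) (L : Ed →L[ℝ] ℝ)
    {x : Ed} {s C : ℝ} (hs : 0 < s) (hC : ∀ y ∈ ball x s, |g y - g x - L (y - x)| ≤ C) :
    |ballAvg d g x s - g x| ≤ C := by
  have hL : Continuous fun y => L (y - x) := L.continuous.comp (continuous_id.sub continuous_const)
  have hsplit : ballAvg d g x s - g x = ballAvg d (fun y => g y - g x - L (y - x)) x s := by
    have hgx : Continuous fun y => g y - g x := hg.sub continuous_const
    rw [ballAvg_sub (hgx.integrableOn_ball_s5 x s) (hL.integrableOn_ball_s5 x s),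
      ballAvg_sub (hg.integrableOn_ball_s5 x s) (continuous_const.integrableOn_ball_s5 x s),
      ballAvg_const _ x hs, ballAvg_linear_sub_center_eq_zero, sub_zero]
  rw [hsplit]
  exact abs_ballAvg_le hs hC

theorem measurable_ballAvg {P : Type*} [MeasurableSpace P]
    {f : P → Ed → ℝ} (hf : Measurable (uncurry f))
    {c : P → Ed} (hc : Measurable c) {ρ : P → ℝ} (hρ : Measurable ρ) :
    Measurable fun p => ballAvg d (f p) (c p) (ρ p) := by
  have hvol : Measurable fun s : ℝ => (volume (ball (0 : Ed) s)).toReal⁻¹ :=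
    (Monotone.measurable fun _ _ hst => measure_mono (ball_subset_ball hst)).ennreal_toReal.inv
  have hball : MeasurableSet {q : P × Ed | q.2 ∈ ball (c q.1) (ρ q.1)} :=
    measurableSet_lt (measurable_snd.dist (hc.comp measurable_fst)) (hρ.comp measurable_fst)
  have hint : Measurable fun p => ∫ y in ball (c p) (ρ p), f p y := by
    simp_rw [← integral_indicator measurableSet_ball]
    exact (StronglyMeasurable.integral_prod_right
      (Measurable.ite hball hf measurable_const).stronglyMeasurable).measurable
  exact (hvol.comp hρ).mul hint

theorem abs_ballAvg_sub_le_of_fderiv {g : Ed → ℝ} (hg : Differentiable ℝ g) {K : ℝ} (hK0 : 0 ≤ K)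
    (hK : ∀ y z, ‖fderiv ℝ g y - fderiv ℝ g z‖ ≤ K * ‖y - z‖) (x : Ed) {s : ℝ} (hs : 0 < s) :
    |ballAvg d g x s - g x| ≤ K * s ^ 2 :=
  abs_ballAvg_sub_le_of_taylor hg.continuous (fderiv ℝ g x) hs fun y hy =>
    (norm_sub_sub_fderiv_le hg hK0 (fun y => hK y x) y).trans <| by
      gcongr; exact (mem_ball_iff_norm.1 hy).le

theorem abs_ballAvg_comp_ballAvg_sub_le {φ : Ed → ℝ} (hφ : Continuous φ) {F : ℝ → ℝ}
    (hF : Continuous F) {M a b : ℝ} (hFM : ∀ t, |F t| ≤ M)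
    (hFlip : ∀ t u, |F t - F u| ≤ M * |t - u|) {x : Ed} {s : ℝ} (hs : 0 < s)
    (ha : ∀ y, |ballAvg d φ y s - φ y| ≤ a) (hb : |ballAvg d (F ∘ φ) x s - F (φ x)| ≤ b) :
    |ballAvg d (fun y => F (ballAvg d φ y s)) x s - F (φ x)| ≤ M * a + b := by
  have hM : 0 ≤ M := (abs_nonneg _).trans (hFM 0)
  have hmeas : Measurable fun y => F (ballAvg d φ y s) :=
    hF.measurable.comp (measurable_ballAvg (f := fun _ => φ) (hφ.measurable.comp measurable_snd)
      measurable_id measurable_const)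
  have hint : IntegrableOn (fun y => F (ballAvg d φ y s)) (ball x s) :=
    Measure.integrableOn_of_bounded measure_ball_lt_top.ne hmeas.aestronglyMeasurable
      (ae_of_all _ fun _ => hFM _)
  have hsplit : ballAvg d (fun y => F (ballAvg d φ y s)) x s - F (φ x) =
      ballAvg d (fun y => F (ballAvg d φ y s) - (F ∘ φ) y) x s +
        (ballAvg d (F ∘ φ) x s - F (φ x)) := by
    rw [ballAvg_sub hint ((hF.comp hφ).integrableOn_ball_s5 x s)]
    ring
  rw [hsplit]
  refine (abs_add_le _ _).trans (add_le_add (abs_ballAvg_le hs fun y _ => ?_) hb)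
  exact (hFlip _ _).trans (mul_le_mul_of_nonneg_left (ha y) hM)

theorem abs_Fdelta_sub_le {α δ M L₁ L₂ : ℝ} (hα0 : 0 < α) (hα2 : α < 2) (hδ0 : 0 < δ)
    (hδ1 : δ ≤ 1) {F : ℝ → ℝ} (hF : ContDiff ℝ 2 F) (hF0 : ∀ t, |F t| ≤ M)
    (hF1 : ∀ t, |deriv F t| ≤ M) (hF2 : ∀ t, |deriv (deriv F) t| ≤ M) {φ : Ed → ℝ}
    (hφ : ContDiff ℝ 2 φ) (hφ1 : ∀ y, ‖fderiv ℝ φ y‖ ≤ L₁)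
    (hφ2 : ∀ y, ‖fderiv ℝ (fderiv ℝ φ) y‖ ≤ L₂) (x : Ed) :
    |Fdelta d α δ F φ x - F (φ x)| ≤
      (α * (M * (L₁ ^ 2 + 2 * L₂)) / (2 - α) + 2 * M) * δ ^ α := by
  have hM : 0 ≤ M := (abs_nonneg _).trans (hF0 0)
  have hL₁ : 0 ≤ L₁ := (norm_nonneg _).trans (hφ1 x)
  have hL₂ : 0 ≤ L₂ := (norm_nonneg (fderiv ℝ (fderiv ℝ φ) x)).trans (hφ2 x)
  have hFd : Differentiable ℝ F := hF.differentiable two_ne_zero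
  have hφd : Differentiable ℝ φ := hφ.differentiable two_ne_zero
  have hFlip : ∀ t u, |F t - F u| ≤ M * |t - u| := fun t u =>
    convex_univ.norm_image_sub_le_of_norm_deriv_le (fun v _ => hFd v) (fun v _ => hF1 v)
      (mem_univ u) (mem_univ t)
  have hF'lip : ∀ t u, |deriv F t - deriv F u| ≤ M * |t - u| := fun t u =>
    convex_univ.norm_image_sub_le_of_norm_deriv_le (fun v _ => hF.differentiable_deriv_two v)
      (fun v _ => hF2 v) (mem_univ u) (mem_univ t)
  have hDφlip : ∀ y z, ‖fderiv ℝ φ y - fderiv ℝ φ z‖ ≤ L₂ * ‖y - z‖ := fun y z =>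
    convex_univ.norm_image_sub_le_of_norm_fderiv_le
      (fun w _ => (hφ.fderiv_right (m := 1) le_rfl).differentiable one_ne_zero w)
      (fun w _ => hφ2 w) (mem_univ z) (mem_univ y)
  have hnear : ∀ s > 0, |ballAvg d (fun y => F (ballAvg d φ y s)) x s - F (φ x)| ≤
      M * (L₁ ^ 2 + 2 * L₂) * s ^ 2 := fun s hs =>
    (abs_ballAvg_comp_ballAvg_sub_le hφ.continuous hF.continuous hF0 hFlip hs
      (fun y => abs_ballAvg_sub_le_of_fderiv hφd hL₂ hDφlip y hs)
      (abs_ballAvg_sub_le_of_fderiv (hFd.comp hφd) (by positivity)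
        (norm_fderiv_comp_sub_le hFd hφd hF1 hF'lip hφ1 hDφlip) x hs)).trans_eq (by ring)
  have hfar : ∀ s > 0, |ballAvg d (fun y => F (ballAvg d φ y s)) x s - F (φ x)| ≤ 2 * M :=
    fun s hs => (abs_sub _ _).trans <|
      (add_le_add (abs_ballAvg_le hs fun _ _ => hF0 _) (hF0 _)).trans_eq (two_mul M).symm
  have hmeas : Measurable fun r => ballAvg d (fun y => F (ballAvg d φ y (δ * r))) x (δ * r) :=
    measurable_ballAvg (f := fun r y => F (ballAvg d φ y (δ * r)))
      (hF.continuous.measurable.comp (measurable_ballAvg (f := fun _ => φ)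
        (hφ.continuous.measurable.comp measurable_snd) measurable_snd
        (measurable_fst.const_mul δ)))
      measurable_const (measurable_id.const_mul δ)
  exact abs_mul_setIntegral_rpow_sub_le hα0 hα2 hδ0 hδ1 (by positivity) hmeas.aestronglyMeasurable
    (fun r hr => hnear _ (mul_pos hδ0 (zero_lt_one.trans hr)))
    (fun r hr => hfar _ (mul_pos hδ0 (zero_lt_one.trans hr)))

end Euclidean

theorem Fdelta_approx_general (d : ℕ) (α : ℝ)
    (hα : α ∈ Set.Ioo (0 : ℝ) (min 2 (d : ℝ))) (M : ℝ) :
    ∃ C > (0 : ℝ), ∀ F : ℝ → ℝ, ContDiff ℝ 2 F →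
      (∀ y, |F y| ≤ M) → (∀ y, |deriv F y| ≤ M) → (∀ y, |deriv (deriv F) y| ≤ M) →
      ∀ δ ∈ Set.Ioc (0 : ℝ) 1,
      ∀ φ : EuclideanSpace ℝ (Fin d) → ℝ, ContDiff ℝ 2 φ →
      (∀ x, φ x ∈ Set.Icc (0 : ℝ) 1) →
      (∀ k : ℕ, 1 ≤ k → k ≤ 2 → ∀ idx : Fin k → Fin d,
        BddAbove (Set.range fun x => |pderiv' d k φ idx x|)) →
      ∀ x : EuclideanSpace ℝ (Fin d),
        |Fdelta d α δ F φ x - F (φ x)| ≤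
          C * δ ^ α * (1 +
            (⨆ idx : Fin 1 → Fin d, ⨆ y, |pderiv' d 1 φ idx y|) ^ 2 +
            ⨆ idx : Fin 2 → Fin d, ⨆ y, |pderiv' d 2 φ idx y|) := by
  obtain ⟨hα0, hαmin⟩ := hα
  have hα2 : α < 2 := hαmin.trans_le (min_le_left _ _)
  have ht : 0 ≤ α / (2 - α) := div_nonneg hα0.le (by linarith)
  refine ⟨2 * |M| * ((d : ℝ) ^ 2 * (α / (2 - α)) + 1) + 1, by positivity, ?_⟩
  intro F hF hF0 hF1 hF2 δ ⟨hδ0, hδ1⟩ φ hφ _ hbdd x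
  set S₁ := ⨆ idx : Fin 1 → Fin d, ⨆ y, |pderiv' d 1 φ idx y|
  set S₂ := ⨆ idx : Fin 2 → Fin d, ⨆ y, |pderiv' d 2 φ idx y|
  have hM : 0 ≤ M := (abs_nonneg _).trans (hF0 0)
  have hS₁ : 0 ≤ S₁ := Real.iSup_nonneg fun _ => Real.iSup_nonneg fun _ => abs_nonneg _
  have hS₂ : 0 ≤ S₂ := Real.iSup_nonneg fun _ => Real.iSup_nonneg fun _ => abs_nonneg _
  have hφ1 := norm_fderiv_le_of_abs_pderiv'_le hS₁ fun _ =>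
    abs_pderiv'_le_iSup (hbdd 1 le_rfl one_le_two _)
  have hφ2 := norm_fderiv_fderiv_le_of_abs_pderiv'_le hS₂ fun _ _ =>
    abs_pderiv'_le_iSup (hbdd 2 one_le_two le_rfl _)
  refine (abs_Fdelta_sub_le hα0 hα2 hδ0 hδ1 hF hF0 hF1 hF2 hφ hφ1 hφ2 x).trans ?_
  have hconst : α * (M * ((d * S₁) ^ 2 + 2 * (d * (d * S₂)))) / (2 - α) + 2 * M ≤
      (2 * M * ((d : ℝ) ^ 2 * (α / (2 - α)) + 1) + 1) * (1 + S₁ ^ 2 + S₂) := by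
    have hMt : 0 ≤ M * (d : ℝ) ^ 2 * (α / (2 - α)) := by positivity
    rw [mul_div_right_comm]
    nlinarith [mul_nonneg hMt (sq_nonneg S₁), mul_nonneg hM (sq_nonneg S₁), mul_nonneg hM hS₂,
      mul_nonneg hMt hS₂]
  rw [abs_of_nonneg hM]
  calc _ ≤ (2 * M * ((d : ℝ) ^ 2 * (α / (2 - α)) + 1) + 1) * (1 + S₁ ^ 2 + S₂) * δ ^ α := by
        gcongr
    _ = _ := by ring

theorem Fdelta_approx (d : ℕ) (hd : 1 ≤ d) (α : ℝ)
    (hα : α ∈ Set.Ioo (0 : ℝ) (min 2 (d : ℝ))) (M : ℝ) :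
    ∃ C > (0 : ℝ), ∀ F : ℝ → ℝ, ContDiff ℝ 2 F →
      (∀ y, |F y| ≤ M) → (∀ y, |deriv F y| ≤ M) → (∀ y, |deriv (deriv F) y| ≤ M) →
      ∀ δ ∈ Set.Ioc (0 : ℝ) 1,
      ∀ φ : EuclideanSpace ℝ (Fin d) → ℝ, ContDiff ℝ 2 φ →
      (∀ x, φ x ∈ Set.Icc (0 : ℝ) 1) →
      (∀ k : ℕ, 1 ≤ k → k ≤ 2 → ∀ idx : Fin k → Fin d,
        BddAbove (Set.range fun x => |pderiv' d k φ idx x|)) →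
      ∀ x : EuclideanSpace ℝ (Fin d),
        |Fdelta d α δ F φ x - F (φ x)| ≤
          C * δ ^ α * (1 +
            (⨆ idx : Fin 1 → Fin d, ⨆ y, |pderiv' d 1 φ idx y|) ^ 2 +
            ⨆ idx : Fin 2 → Fin d, ⨆ y, |pderiv' d 2 φ idx y|) :=
  Fdelta_approx_general d α hα M
end

section
/- Let d ≥ 1 and α > 0. There exists a constant C_{d,α} > 0, depending only on d and α, such that for all z₁, z₂ ∈ ℝ^d with z₁ ≠ z₂, ∫_{|z₁−z₂|/2}^∞ V_r(z₁,z₂) · r^{−(d+α+1)} dr = C_{d,α} · |z₁ − z₂|^{−α}. -/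
/-!
The lens volume `V_r(x, y)` depends only on `|x - y|`, since translations and reflections preserve
Lebesgue measure, and it is homogeneous: `V_{sr}(sx, sy) = s^d V_r(x, y)`. Substituting
`r = |z₁ - z₂| t` therefore turns the integral into `|z₁ - z₂|^(-α)` times the same integral
for a fixed unit vector `e` and `0`, taken over `t > 1/2`. That constant is finite because
`V_t ≤ |B(0,1)| t^d` and `d + α + 1 > d + 1`, and positive because the two balls overlap
for `t > 1/2`.
-/

open MeasureTheory Metric Set Module
open scoped Pointwise

section

variable {E : Type*} [NormedAddCommGroup E] [InnerProductSpace ℝ E] [FiniteDimensional ℝ E]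
  [MeasurableSpace E] [BorelSpace E]

noncomputable def intersectionVolume (r : ℝ) (x y : E) : ℝ :=
  (volume (ball x r ∩ ball y r)).toReal

lemma intersectionVolume_sub_right (r : ℝ) (x y : E) :
    intersectionVolume r x y = intersectionVolume r (x - y) 0 := by
  have hpre : (y + ·) ⁻¹' (ball x r ∩ ball y r) = ball (x - y) r ∩ ball 0 r := by
    ext z
    simp [dist_eq_norm]
  rw [intersectionVolume, intersectionVolume, ← hpre, measure_preimage_add]

lemma intersectionVolume_zero_of_norm_eq (r : ℝ) {x y : E} (h : ‖x‖ = ‖y‖) :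
    intersectionVolume r x 0 = intersectionVolume r y 0 := by
  set L := Submodule.reflection (ℝ ∙ (x - y))ᗮ
  have hpre : L ⁻¹' (ball y r ∩ ball 0 r) = ball x r ∩ ball 0 r := by
    ext z
    simp only [mem_preimage, mem_inter_iff, mem_ball_iff_norm, sub_zero]
    rw [← Submodule.reflection_sub h, ← map_sub, L.norm_map, L.norm_map]
  rw [intersectionVolume, intersectionVolume, ← hpre, L.measurePreserving.measure_preimage
    (measurableSet_ball.inter measurableSet_ball).nullMeasurableSet]

lemma intersectionVolume_eq_of_dist_eq (r : ℝ) {x y x' y' : E} (h : dist x y = dist x' y') :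
    intersectionVolume r x y = intersectionVolume r x' y' := by
  rw [intersectionVolume_sub_right r x, intersectionVolume_sub_right r x',
    intersectionVolume_zero_of_norm_eq r]
  simpa [dist_eq_norm] using h

lemma intersectionVolume_mul_smul {s : ℝ} (hs : 0 < s) (r : ℝ) (x y : E) :
    intersectionVolume (s * r) (s • x) (s • y) = s ^ finrank ℝ E * intersectionVolume r x y := by
  have hball : ∀ z : E, ball (s • z) (s * r) = s • ball z r := fun z => by
    rw [_root_.smul_ball hs.ne', Real.norm_of_nonneg hs.le]
  rw [intersectionVolume, intersectionVolume, hball, hball, ← smul_set_inter₀ hs.ne',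
    Measure.addHaar_smul, ENNReal.toReal_mul, ENNReal.toReal_ofReal (abs_nonneg _), abs_pow,
    abs_of_pos hs]

lemma intersectionVolume_dist_mul {e : E} (he : ‖e‖ = 1) {x y : E} (hxy : x ≠ y) (r : ℝ) :
    intersectionVolume (dist x y * r) x y = dist x y ^ finrank ℝ E * intersectionVolume r e 0 := by
  have hs : 0 < dist x y := dist_pos.2 hxy
  calc intersectionVolume (dist x y * r) x y
      = intersectionVolume (dist x y * r) (dist x y • e) (dist x y • 0) := by
        refine intersectionVolume_eq_of_dist_eq _ ?_
        rw [smul_zero, dist_zero_right, norm_smul, he, Real.norm_of_nonneg hs.le, mul_one]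
    _ = dist x y ^ finrank ℝ E * intersectionVolume r e 0 := intersectionVolume_mul_smul hs r e 0

lemma monotone_intersectionVolume (x y : E) : Monotone fun r => intersectionVolume r x y :=
  fun _ _ hrr' => ENNReal.toReal_mono
    (measure_mono inter_subset_left |>.trans_lt measure_ball_lt_top).ne
    (measure_mono (inter_subset_inter (ball_subset_ball hrr') (ball_subset_ball hrr')))

lemma intersectionVolume_le {r : ℝ} (hr : 0 < r) (x y : E) :
    intersectionVolume r x y ≤ r ^ finrank ℝ E * (volume (ball (0 : E) 1)).toReal := by
  calc intersectionVolume r x y ≤ (volume (ball x r)).toReal :=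
        ENNReal.toReal_mono measure_ball_lt_top.ne (measure_mono inter_subset_left)
    _ = r ^ finrank ℝ E * (volume (ball (0 : E) 1)).toReal := by
        rw [Measure.addHaar_ball_of_pos _ _ hr, ENNReal.toReal_mul,
          ENNReal.toReal_ofReal (by positivity)]

lemma intersectionVolume_pos {r : ℝ} {x y : E} (h : dist x y < 2 * r) :
    0 < intersectionVolume r x y := by
  have hsub : ball (midpoint ℝ x y) (r - dist x y / 2) ⊆ ball x r ∩ ball y r := by
    refine subset_inter (ball_subset_ball' ?_) (ball_subset_ball' ?_)
    · rw [dist_midpoint_left]; norm_num; linarith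
    · rw [dist_midpoint_right]; norm_num; linarith
  refine ENNReal.toReal_pos ?_ (measure_mono inter_subset_left |>.trans_lt measure_ball_lt_top).ne
  exact ((measure_ball_pos _ _ (by linarith)).trans_le (measure_mono hsub)).ne'

lemma integrableOn_intersectionVolume_mul_rpow {p c : ℝ} (hp : finrank ℝ E + 1 < p) (hc : 0 < c)
    (x y : E) : IntegrableOn (fun r => intersectionVolume r x y * r ^ (-p)) (Ioi c) := by
  set κ := (volume (ball (0 : E) 1)).toReal
  have hdom : IntegrableOn (fun r : ℝ => κ * r ^ ((finrank ℝ E : ℝ) - p)) (Ioi c) :=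
    (integrableOn_Ioi_rpow_of_lt (by linarith) hc).const_mul κ
  refine hdom.mono' ((monotone_intersectionVolume x y).measurable.mul
    (measurable_id.pow_const _)).aestronglyMeasurable ?_
  filter_upwards [ae_restrict_mem measurableSet_Ioi] with r hr
  have hr0 : 0 < r := hc.trans hr
  have hnonneg : 0 ≤ intersectionVolume r x y * r ^ (-p) :=
    mul_nonneg ENNReal.toReal_nonneg (by positivity)
  rw [Real.norm_of_nonneg hnonneg, sub_eq_add_neg, Real.rpow_add hr0, Real.rpow_natCast]
  calc intersectionVolume r x y * r ^ (-p) ≤ r ^ finrank ℝ E * κ * r ^ (-p) := by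
        gcongr; exact intersectionVolume_le hr0 x y
    _ = κ * (r ^ finrank ℝ E * r ^ (-p)) := by ring

lemma setIntegral_intersectionVolume_mul_rpow_pos {p c : ℝ} (hp : finrank ℝ E + 1 < p)
    (hc : 0 < c) {x y : E} (hxy : dist x y ≤ 2 * c) :
    0 < ∫ r in Ioi c, intersectionVolume r x y * r ^ (-p) := by
  have hpos : ∀ r ∈ Ioi c, 0 < intersectionVolume r x y * r ^ (-p) := fun r hr =>
    mul_pos (intersectionVolume_pos (by linarith [mem_Ioi.1 hr]))
      (Real.rpow_pos_of_pos (hc.trans hr) _)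
  refine (setIntegral_pos_iff_support_of_nonneg_ae ?_
    (integrableOn_intersectionVolume_mul_rpow hp hc x y)).2 ?_
  · filter_upwards [ae_restrict_mem measurableSet_Ioi] with r hr using (hpos r hr).le
  · rw [inter_eq_right.2 fun r hr => Function.mem_support.2 (hpos r hr).ne', Real.volume_Ioi]
    exact ENNReal.zero_lt_top

lemma setIntegral_intersectionVolume_mul_rpow {e : E} (he : ‖e‖ = 1) {x y : E} (hxy : x ≠ y)
    {c : ℝ} (hc : 0 ≤ c) (p : ℝ) :
    ∫ r in Ioi (dist x y * c), intersectionVolume r x y * r ^ (-p) =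
      dist x y ^ ((finrank ℝ E : ℝ) + 1 - p) *
        ∫ t in Ioi c, intersectionVolume t e 0 * t ^ (-p) := by
  have hs : 0 < dist x y := dist_pos.2 hxy
  rw [← integral_comp_mul_left_Ioi' _ _ hs, smul_eq_mul, ← integral_const_mul, ← integral_const_mul]
  refine setIntegral_congr_fun measurableSet_Ioi fun t ht => ?_
  rw [intersectionVolume_dist_mul he hxy, Real.mul_rpow hs.le (hc.trans (le_of_lt ht)),
    sub_eq_add_neg, Real.rpow_add hs, Real.rpow_add hs, Real.rpow_natCast, Real.rpow_one]
  ring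

end

theorem intersection_volume_kernel (d : ℕ) (hd : 1 ≤ d) (α : ℝ) (hα : 0 < α) :
    ∃ C > (0 : ℝ), ∀ z₁ z₂ : EuclideanSpace ℝ (Fin d), z₁ ≠ z₂ →
      ∫ r in Set.Ioi (‖z₁ - z₂‖ / 2),
          (volume (ball z₁ r ∩ ball z₂ r)).toReal * r ^ (-((d : ℝ) + α + 1)) =
        C * ‖z₁ - z₂‖ ^ (-α) := by
  set e : EuclideanSpace ℝ (Fin d) := EuclideanSpace.single ⟨0, hd⟩ 1
  have he : ‖e‖ = 1 := by simp [e]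
  have hp : (finrank ℝ (EuclideanSpace ℝ (Fin d)) : ℝ) + 1 < d + α + 1 := by
    rw [finrank_euclideanSpace_fin]; linarith
  refine ⟨_, setIntegral_intersectionVolume_mul_rpow_pos hp one_half_pos
    (by rw [dist_zero_right, he]; norm_num), fun z₁ z₂ hz => ?_⟩
  have key := setIntegral_intersectionVolume_mul_rpow he hz one_half_pos.le ((d : ℝ) + α + 1)
  rw [finrank_euclideanSpace_fin, ← div_eq_mul_one_div, dist_eq_norm,
    show (d : ℝ) + 1 - (d + α + 1) = -α by ring] at key
  rw [mul_comm, ← key]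
  rfl
end

section
/- Let d ≥ 1 and r > 0. For every measurable w : ℝ^d → [0,1] and every bounded integrable φ : ℝ^d → ℝ, ∫_{ℝ^d} ∫_{ℝ^d} φ(z₁) φ(z₂) σ^{(r)}_{z₁,z₂}(w) dz₁ dz₂ = ∫_{ℝ^d} [ ⟨w⟩(x,r) · (⟨φ·(1−w)⟩(x,r))² + (1 − ⟨w⟩(x,r)) · (⟨φ·w⟩(x,r))² ] dx. -/
open MeasureTheory Metric

/-- `σ^{(r)}_{z₁,z₂}(w)`, the infinitesimal reproduction covariance of the SLFV. -/
noncomputable def sigmaR (d : ℕ) (r : ℝ) (w : EuclideanSpace ℝ (Fin d) → ℝ)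
    (z₁ z₂ : EuclideanSpace ℝ (Fin d)) : ℝ :=
  ((volume (ball (0 : EuclideanSpace ℝ (Fin d)) r)).toReal ^ 2)⁻¹ *
    ∫ x in ball z₁ r ∩ ball z₂ r,
      (ballAvg d w x r * (1 - w z₁) * (1 - w z₂) +
        (1 - ballAvg d w x r) * w z₁ * w z₂)

/-! Since `1_{B(z₁,r)}(x) 1_{B(z₂,r)}(x) = 1_{B(x,r)}(z₁) 1_{B(x,r)}(z₂)`, Fubini turns
`∫∫ g(z₁) g(z₂) ∫_{B(z₁,r) ∩ B(z₂,r)} a(x) dx dz₂ dz₁` into `∫ a(x) (∫_{B(x,r)} g)² dx` for bounded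
`a` and integrable `g`. Expanding `σ` writes the left-hand side as `V_r⁻²` times the sum of two
such forms, with `(a, g) = (⟨w⟩, φ (1 - w))` and `(1 - ⟨w⟩, φ w)`, and that is the right-hand side.
Each use of Fubini swaps the order of integration in `∫∫ f(z) b(x) 1{|x - z| < r} dx dz`, which is
integrable on the product because Haar measure gives all balls of radius `r` the same finite
volume. -/

lemma MeasureTheory.Integrable.norm_setIntegral_le {X : Type*} [MeasurableSpace X]
    {μ : Measure X} {f : X → ℝ} (hf : Integrable f μ) (s : Set X) :
    ‖∫ x in s, f x ∂μ‖ ≤ ∫ x, ‖f x‖ ∂μ :=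
  (norm_integral_le_integral_norm _).trans
    (setIntegral_le_integral hf.norm (ae_of_all _ fun _ => norm_nonneg _))

lemma MeasureTheory.Integrable.norm_mul_setIntegral_le {X : Type*} [MeasurableSpace X]
    {μ : Measure X} {g : X → ℝ} (hg : Integrable g μ) {c C : ℝ} (hc : ‖c‖ ≤ C) (s : Set X) :
    ‖c * ∫ y in s, g y ∂μ‖ ≤ C * ∫ y, ‖g y‖ ∂μ := by
  rw [norm_mul]
  exact mul_le_mul hc (hg.norm_setIntegral_le s) (norm_nonneg _) ((norm_nonneg _).trans hc)

section Metric

variable {X : Type*} [PseudoMetricSpace X] {r : ℝ} {f b : X → ℝ}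

lemma indicator_dist_lt_prodMk_left (z : X) :
    (fun x => {p : X × X | dist p.2 p.1 < r}.indicator (fun p => f p.1 * b p.2) (z, x)) =
      (ball z r).indicator fun x => f z * b x := by
  ext x
  simp [Set.indicator, mem_ball]

lemma indicator_dist_lt_prodMk_right (x : X) :
    (fun z => {p : X × X | dist p.2 p.1 < r}.indicator (fun p => f p.1 * b p.2) (z, x)) =
      (ball x r).indicator fun z => f z * b x := by
  ext z
  simp [Set.indicator, mem_ball, dist_comm]

variable [MeasurableSpace X] [OpensMeasurableSpace X] {μ : Measure X}

lemma integral_indicator_dist_lt_left (z : X) :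
    ∫ x, {p : X × X | dist p.2 p.1 < r}.indicator (fun p => f p.1 * b p.2) (z, x) ∂μ =
      f z * ∫ x in ball z r, b x ∂μ := by
  rw [indicator_dist_lt_prodMk_left, integral_indicator measurableSet_ball, integral_const_mul]

lemma integral_indicator_dist_lt_right (x : X) :
    ∫ z, {p : X × X | dist p.2 p.1 < r}.indicator (fun p => f p.1 * b p.2) (z, x) ∂μ =
      b x * ∫ z in ball x r, f z ∂μ := by
  rw [indicator_dist_lt_prodMk_right, integral_indicator measurableSet_ball, integral_mul_const,
    mul_comm]

lemma setIntegral_ball_inter_eq (a : X → ℝ) (z₁ z₂ : X) :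
    ∫ x in ball z₁ r ∩ ball z₂ r, a x ∂μ = ∫ x in ball z₂ r, (ball z₁ r).indicator a x ∂μ := by
  rw [setIntegral_indicator measurableSet_ball, Set.inter_comm]

variable [SecondCountableTopology X]

lemma MeasureTheory.AEStronglyMeasurable.indicator_dist_lt_mul (hf : AEStronglyMeasurable f μ)
    (hb : AEStronglyMeasurable b μ) :
    AEStronglyMeasurable ({p : X × X | dist p.2 p.1 < r}.indicator fun p => f p.1 * b p.2)
      (μ.prod μ) :=
  (hf.comp_fst.mul hb.comp_snd).indicator
    (measurableSet_lt (measurable_snd.dist measurable_fst) measurable_const)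

lemma MeasureTheory.AEStronglyMeasurable.setIntegral_ball [SFinite μ]
    (hb : AEStronglyMeasurable b μ) :
    AEStronglyMeasurable (fun z => ∫ x in ball z r, b x ∂μ) μ := by
  refine (aestronglyMeasurable_const.indicator_dist_lt_mul (f := fun _ => (1 : ℝ)) (r := r)
    hb).integral_prod_right'.congr (ae_of_all _ fun z => ?_)
  exact (integral_indicator_dist_lt_left (f := fun _ => 1) z).trans (one_mul _)

lemma MeasureTheory.AEStronglyMeasurable.mul_setIntegral_ball [SFinite μ] {a : X → ℝ}
    (ha : AEStronglyMeasurable a μ) (hb : AEStronglyMeasurable b μ) :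
    AEStronglyMeasurable (fun x => a x * ∫ y in ball x r, b y ∂μ) μ :=
  ha.mul hb.setIntegral_ball

end Metric

section Haar

variable {E : Type*} [NormedAddCommGroup E] [ProperSpace E] [MeasurableSpace E] [BorelSpace E]
  {μ : Measure E} [μ.IsAddHaarMeasure] {r C : ℝ} {f b a g : E → ℝ}

lemma integrable_indicator_dist_lt_mul (hf : Integrable f μ) (hb : AEStronglyMeasurable b μ)
    (hbC : ∀ x, ‖b x‖ ≤ C) :
    Integrable ({p : E × E | dist p.2 p.1 < r}.indicator fun p => f p.1 * b p.2) (μ.prod μ) := by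
  have hF := hf.1.indicator_dist_lt_mul hb (r := r)
  have hbound : ∀ z x, ‖f z * b x‖ ≤ ‖f z‖ * C := fun z x => by
    rw [norm_mul]; exact mul_le_mul_of_nonneg_left (hbC x) (norm_nonneg _)
  refine (integrable_prod_iff hF).2 ⟨ae_of_all _ fun z => ?_, ?_⟩
  · rw [indicator_dist_lt_prodMk_left]
    exact (Measure.integrableOn_of_bounded measure_ball_lt_top.ne (hb.const_mul (f z))
      (ae_of_all _ (hbound z))).integrable_indicator measurableSet_ball
  refine (hf.norm.mul_const (C * μ.real (ball 0 r))).mono' hF.norm.integral_prod_right'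
    (ae_of_all _ fun z => ?_)
  have hsection : (fun x => ‖{p : E × E | dist p.2 p.1 < r}.indicator
      (fun p => f p.1 * b p.2) (z, x)‖) = (ball z r).indicator fun x => ‖f z * b x‖ := by
    ext x
    rw [← norm_indicator_eq_indicator_norm, ← indicator_dist_lt_prodMk_left]
  rw [hsection, integral_indicator measurableSet_ball, ← mul_assoc,
    ← Measure.addHaar_real_ball_center μ z]
  exact norm_setIntegral_le_of_norm_le_const measure_ball_lt_top fun x _ => by
    rw [norm_norm]; exact hbound z x

theorem MeasureTheory.Integrable.mul_setIntegral_ball (hf : Integrable f μ)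
    (hb : AEStronglyMeasurable b μ) (hbC : ∀ x, ‖b x‖ ≤ C) :
    Integrable (fun z => f z * ∫ x in ball z r, b x ∂μ) μ :=
  (integrable_indicator_dist_lt_mul hf hb hbC).integral_prod_left.congr
    (ae_of_all _ fun z => integral_indicator_dist_lt_left z)

theorem MeasureTheory.Integrable.bdd_mul_setIntegral_ball (hf : Integrable f μ)
    (hb : AEStronglyMeasurable b μ) (hbC : ∀ x, ‖b x‖ ≤ C) :
    Integrable (fun x => b x * ∫ z in ball x r, f z ∂μ) μ :=
  (integrable_indicator_dist_lt_mul hf hb hbC).integral_prod_right.congr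
    (ae_of_all _ fun x => integral_indicator_dist_lt_right x)

theorem integral_mul_setIntegral_ball_comm (hf : Integrable f μ)
    (hb : AEStronglyMeasurable b μ) (hbC : ∀ x, ‖b x‖ ≤ C) :
    ∫ z, f z * ∫ x in ball z r, b x ∂μ ∂μ = ∫ x, b x * ∫ z in ball x r, f z ∂μ ∂μ := by
  have hswap := integral_integral_swap (μ := μ) (ν := μ)
    (f := fun z x => {p : E × E | dist p.2 p.1 < r}.indicator (fun p => f p.1 * b p.2) (z, x))
    (integrable_indicator_dist_lt_mul hf hb hbC)
  simpa only [integral_indicator_dist_lt_left, integral_indicator_dist_lt_right] using hswap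

theorem integral_mul_mul_setIntegral_ball_inter (hg : Integrable g μ)
    (ha : AEStronglyMeasurable a μ) (haC : ∀ x, ‖a x‖ ≤ C) (z₁ : E) :
    ∫ z₂, g z₁ * g z₂ * ∫ x in ball z₁ r ∩ ball z₂ r, a x ∂μ ∂μ =
      g z₁ * ∫ x in ball z₁ r, a x * ∫ y in ball x r, g y ∂μ ∂μ := by
  simp_rw [mul_assoc, setIntegral_ball_inter_eq]
  rw [integral_const_mul, integral_mul_setIntegral_ball_comm hg (ha.indicator measurableSet_ball)
    (fun x => (norm_indicator_le_norm_self _ _).trans (haC x)),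
    ← integral_indicator measurableSet_ball]
  simp_rw [Set.indicator_mul_left]

theorem MeasureTheory.Integrable.mul_mul_setIntegral_ball_inter (hg : Integrable g μ)
    (ha : AEStronglyMeasurable a μ) (haC : ∀ x, ‖a x‖ ≤ C) (z₁ : E) :
    Integrable (fun z₂ => g z₁ * g z₂ * ∫ x in ball z₁ r ∩ ball z₂ r, a x ∂μ) μ := by
  simp_rw [mul_assoc, setIntegral_ball_inter_eq]
  exact (hg.mul_setIntegral_ball (ha.indicator measurableSet_ball)
    (fun x => (norm_indicator_le_norm_self _ _).trans (haC x))).const_mul _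

theorem MeasureTheory.Integrable.integral_mul_mul_setIntegral_ball_inter (hg : Integrable g μ)
    (ha : AEStronglyMeasurable a μ) (haC : ∀ x, ‖a x‖ ≤ C) :
    Integrable (fun z₁ => ∫ z₂, g z₁ * g z₂ * ∫ x in ball z₁ r ∩ ball z₂ r, a x ∂μ ∂μ) μ := by
  simp_rw [_root_.integral_mul_mul_setIntegral_ball_inter hg ha haC]
  exact hg.mul_setIntegral_ball (ha.mul_setIntegral_ball hg.1)
    fun x => hg.norm_mul_setIntegral_le (haC x) _

theorem integral_integral_mul_mul_setIntegral_ball_inter (hg : Integrable g μ)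
    (ha : AEStronglyMeasurable a μ) (haC : ∀ x, ‖a x‖ ≤ C) :
    ∫ z₁, ∫ z₂, g z₁ * g z₂ * ∫ x in ball z₁ r ∩ ball z₂ r, a x ∂μ ∂μ ∂μ =
      ∫ x, a x * (∫ y in ball x r, g y ∂μ) ^ 2 ∂μ := by
  simp_rw [integral_mul_mul_setIntegral_ball_inter hg ha haC]
  rw [integral_mul_setIntegral_ball_comm hg (ha.mul_setIntegral_ball hg.1)
    fun x => hg.norm_mul_setIntegral_le (haC x) _]
  simp_rw [sq, mul_assoc]

theorem MeasureTheory.Integrable.mul_setIntegral_ball_sq (hg : Integrable g μ)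
    (ha : AEStronglyMeasurable a μ) (haC : ∀ x, ‖a x‖ ≤ C) :
    Integrable (fun x => a x * (∫ y in ball x r, g y ∂μ) ^ 2) μ := by
  simpa only [sq, mul_assoc] using
    hg.bdd_mul_setIntegral_ball (ha.mul_setIntegral_ball hg.1)
      fun x => hg.norm_mul_setIntegral_le (haC x) _

end Haar

lemma norm_le_one_of_mem_Icc {t : ℝ} (ht : t ∈ Set.Icc (0 : ℝ) 1) : ‖t‖ ≤ 1 :=
  abs_le.2 ⟨by linarith [ht.1], ht.2⟩

lemma norm_one_sub_le_one_of_mem_Icc {t : ℝ} (ht : t ∈ Set.Icc (0 : ℝ) 1) : ‖1 - t‖ ≤ 1 :=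
  abs_le.2 ⟨by linarith [ht.2], by linarith [ht.1]⟩

section BallAverage

variable {d : ℕ} {r : ℝ} {w : EuclideanSpace ℝ (Fin d) → ℝ}

lemma ballAvg_mem_Icc (hw : ∀ x, w x ∈ Set.Icc (0 : ℝ) 1) (x : EuclideanSpace ℝ (Fin d)) :
    ballAvg d w x r ∈ Set.Icc (0 : ℝ) 1 := by
  have hV : ∫ y in ball x r, w y ≤ (volume (ball (0 : EuclideanSpace ℝ (Fin d)) r)).toReal := by
    have := norm_setIntegral_le_of_norm_le_const (μ := volume)
      (measure_ball_lt_top (x := x) (r := r))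
      fun y _ => norm_le_one_of_mem_Icc (hw y)
    rw [one_mul, Measure.addHaar_real_ball_center, measureReal_def] at this
    exact (le_abs_self _).trans this
  have hnonneg : 0 ≤ ∫ y in ball x r, w y :=
    setIntegral_nonneg measurableSet_ball fun y _ => (hw y).1
  exact ⟨mul_nonneg (inv_nonneg.2 ENNReal.toReal_nonneg) hnonneg,
    inv_mul_le_one_of_le₀ hV ENNReal.toReal_nonneg⟩

lemma aestronglyMeasurable_ballAvg (hw : AEStronglyMeasurable w volume) :
    AEStronglyMeasurable (fun x => ballAvg d w x r) volume :=
  hw.setIntegral_ball.const_mul _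

lemma mul_mul_sigmaR (hwm : AEStronglyMeasurable w volume) (hw : ∀ x, w x ∈ Set.Icc (0 : ℝ) 1)
    (φ : EuclideanSpace ℝ (Fin d) → ℝ) (z₁ z₂ : EuclideanSpace ℝ (Fin d)) :
    φ z₁ * φ z₂ * sigmaR d r w z₁ z₂ =
      ((volume (ball (0 : EuclideanSpace ℝ (Fin d)) r)).toReal ^ 2)⁻¹ *
        (φ z₁ * (1 - w z₁) * (φ z₂ * (1 - w z₂)) *
            (∫ x in ball z₁ r ∩ ball z₂ r, ballAvg d w x r) +
          φ z₁ * w z₁ * (φ z₂ * w z₂) *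
            ∫ x in ball z₁ r ∩ ball z₂ r, (1 - ballAvg d w x r)) := by
  have hfin : volume (ball z₁ r ∩ ball z₂ r) ≠ ⊤ :=
    (measure_mono Set.inter_subset_left).trans_lt measure_ball_lt_top |>.ne
  have hA : IntegrableOn (fun x => ballAvg d w x r) (ball z₁ r ∩ ball z₂ r) :=
    Measure.integrableOn_of_bounded hfin (aestronglyMeasurable_ballAvg hwm)
      (ae_of_all _ fun x => norm_le_one_of_mem_Icc (ballAvg_mem_Icc hw x))
  have hA' : IntegrableOn (fun x => 1 - ballAvg d w x r) (ball z₁ r ∩ ball z₂ r) :=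
    (integrableOn_const hfin).sub hA
  unfold sigmaR
  rw [integral_add ((hA.mul_const _).mul_const _) ((hA'.mul_const _).mul_const _),
    integral_mul_const, integral_mul_const, integral_mul_const, integral_mul_const]
  ring

end BallAverage

theorem sigmaR_integral_identity_general (d : ℕ) (r : ℝ)
    (w : EuclideanSpace ℝ (Fin d) → ℝ) (hwm : Measurable w)
    (hw : ∀ x, w x ∈ Set.Icc (0 : ℝ) 1)
    (φ : EuclideanSpace ℝ (Fin d) → ℝ) (hφi : Integrable φ volume) :
    ∫ z₁ : EuclideanSpace ℝ (Fin d), ∫ z₂ : EuclideanSpace ℝ (Fin d),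
        φ z₁ * φ z₂ * sigmaR d r w z₁ z₂ =
      ∫ x : EuclideanSpace ℝ (Fin d),
        (ballAvg d w x r * (ballAvg d (fun y => φ y * (1 - w y)) x r) ^ 2 +
          (1 - ballAvg d w x r) * (ballAvg d (fun y => φ y * w y) x r) ^ 2) := by
  have hA := aestronglyMeasurable_ballAvg (r := r) hwm.aestronglyMeasurable
  have hA' : AEStronglyMeasurable (fun x => 1 - ballAvg d w x r) volume :=
    aestronglyMeasurable_const.sub hA
  have hA₁ (x) := norm_le_one_of_mem_Icc (ballAvg_mem_Icc (r := r) hw x)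
  have hA₂ (x) := norm_one_sub_le_one_of_mem_Icc (ballAvg_mem_Icc (r := r) hw x)
  have hg₁ : Integrable (fun y => φ y * (1 - w y)) volume :=
    hφi.mul_bdd (aestronglyMeasurable_const.sub hwm.aestronglyMeasurable)
      (ae_of_all _ fun y => norm_one_sub_le_one_of_mem_Icc (hw y))
  have hg₂ : Integrable (fun y => φ y * w y) volume :=
    hφi.mul_bdd hwm.aestronglyMeasurable (ae_of_all _ fun y => norm_le_one_of_mem_Icc (hw y))
  simp_rw [mul_mul_sigmaR hwm.aestronglyMeasurable hw, integral_const_mul,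
    integral_add (hg₁.mul_mul_setIntegral_ball_inter hA hA₁ _)
      (hg₂.mul_mul_setIntegral_ball_inter hA' hA₂ _)]
  rw [integral_add (hg₁.integral_mul_mul_setIntegral_ball_inter hA hA₁)
      (hg₂.integral_mul_mul_setIntegral_ball_inter hA' hA₂),
    integral_integral_mul_mul_setIntegral_ball_inter hg₁ hA hA₁,
    integral_integral_mul_mul_setIntegral_ball_inter hg₂ hA' hA₂,
    ← integral_add (hg₁.mul_setIntegral_ball_sq hA hA₁) (hg₂.mul_setIntegral_ball_sq hA' hA₂),
    ← integral_const_mul]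
  congr 1 with x
  unfold ballAvg
  ring

theorem sigmaR_integral_identity (d : ℕ) (hd : 1 ≤ d) (r : ℝ) (hr : 0 < r)
    (w : EuclideanSpace ℝ (Fin d) → ℝ) (hwm : Measurable w)
    (hw : ∀ x, w x ∈ Set.Icc (0 : ℝ) 1)
    (φ : EuclideanSpace ℝ (Fin d) → ℝ) (hφi : Integrable φ volume)
    (hφb : ∃ M : ℝ, ∀ x, |φ x| ≤ M) :
    ∫ z₁ : EuclideanSpace ℝ (Fin d), ∫ z₂ : EuclideanSpace ℝ (Fin d),
        φ z₁ * φ z₂ * sigmaR d r w z₁ z₂ =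
      ∫ x : EuclideanSpace ℝ (Fin d),
        (ballAvg d w x r * (ballAvg d (fun y => φ y * (1 - w y)) x r) ^ 2 +
          (1 - ballAvg d w x r) * (ballAvg d (fun y => φ y * w y) x r) ^ 2) :=
  sigmaR_integral_identity_general d r w hwm hw φ hφi
end

section
/- Let λ > 0, M > 0 and let f : (0,∞) → [0,M] be measurable and Lebesgue integrable on (0,∞). Let (r_N) be a sequence in (0,1] with r_N → 0, let (D_N) be a sequence of positive reals with D_N → 1, and let (t_N) be a sequence of positive reals with t_N / r_N² → ∞. Then r_N^{−2} ∫_0^{t_N} e^{−2λs} f(D_N s / r_N²) ds → ∫_0^∞ f(s) ds as N → ∞. -/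
open MeasureTheory Filter
open scoped Topology

/-
After the substitution `u = D s / r²` the quantity becomes
`D⁻¹ ∫_{(0, D t / r²]} exp (-(2λ r² / D) u) f u du`. The damping rate `2λ r² / D` tends to `0` and
the upper limit `D t / r²` tends to `∞`, so dominated convergence (with dominating function `|f|`)
gives the limit `∫_{(0,∞)} f`.
-/

theorem setIntegral_Ioc_comp_mul_left {E : Type*} [NormedAddCommGroup E] [NormedSpace ℝ E]
    (g : ℝ → E) {a : ℝ} (ha : 0 < a) (t : ℝ) :
    ∫ s in Set.Ioc 0 t, g (a * s) = a⁻¹ • ∫ u in Set.Ioc 0 (a * t), g u := by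
  simpa [LinearOrderedField.smul_Ioc ha] using
    Measure.setIntegral_comp_smul_of_pos volume g (Set.Ioc 0 t) ha

theorem inv_mul_setIntegral_Ioc_exp_mul_comp_div (k : ℝ) (f : ℝ → ℝ) {D ρ : ℝ} (hD : 0 < D)
    (hρ : 0 < ρ) (t : ℝ) :
    ρ⁻¹ * ∫ s in Set.Ioc 0 t, Real.exp (k * s) * f (D * s / ρ) =
      D⁻¹ * ∫ u in Set.Ioc 0 (D / ρ * t), Real.exp (k * ρ / D * u) * f u := by
  have hDρ : 0 < D / ρ := div_pos hD hρ
  calc ρ⁻¹ * ∫ s in Set.Ioc 0 t, Real.exp (k * s) * f (D * s / ρ)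
      = ρ⁻¹ * ∫ s in Set.Ioc 0 t,
          Real.exp (k * ρ / D * (D / ρ * s)) * f (D / ρ * s) := by
        congr 1
        refine setIntegral_congr_fun measurableSet_Ioc fun s _ => ?_
        field_simp
    _ = D⁻¹ * ∫ u in Set.Ioc 0 (D / ρ * t), Real.exp (k * ρ / D * u) * f u := by
        rw [setIntegral_Ioc_comp_mul_left (fun u => Real.exp (k * ρ / D * u) * f u) hDρ,
          smul_eq_mul, ← mul_assoc]
        field_simp

theorem tendsto_setIntegral_Ioc_exp_smul {ι E : Type*} [NormedAddCommGroup E] [NormedSpace ℝ E]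
    {l : Filter ι} [l.IsCountablyGenerated] {g : ℝ → E} (hg : IntegrableOn g (Set.Ioi 0))
    {c T : ι → ℝ} (hc : ∀ᶠ i in l, c i ≤ 0) (hc0 : Tendsto c l (𝓝 0))
    (hT : Tendsto T l atTop) :
    Tendsto (fun i => ∫ u in Set.Ioc 0 (T i), Real.exp (c i * u) • g u) l
      (𝓝 (∫ u in Set.Ioi 0, g u)) := by
  have hIoc : ∀ i, ∫ u in Set.Ioc 0 (T i), Real.exp (c i * u) • g u =
      ∫ u in Set.Ioi 0, (Set.Iic (T i)).indicator (fun u => Real.exp (c i * u) • g u) u := by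
    intro i
    rw [integral_indicator measurableSet_Iic, Measure.restrict_restrict measurableSet_Iic,
      Set.inter_comm, Set.Ioi_inter_Iic]
  simp only [hIoc]
  refine tendsto_integral_filter_of_dominated_convergence (fun u => ‖g u‖) ?_ ?_ hg.norm ?_
  · exact .of_forall fun i => ((Real.continuous_exp.comp (continuous_const.mul
      continuous_id)).aestronglyMeasurable.smul hg.aestronglyMeasurable).indicator
      measurableSet_Iic
  · filter_upwards [hc] with i hci
    filter_upwards [ae_restrict_mem measurableSet_Ioi] with u hu
    refine (norm_indicator_le_norm_self _ _).trans ?_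
    rw [norm_smul, Real.norm_of_nonneg (Real.exp_nonneg _)]
    exact mul_le_of_le_one_left (norm_nonneg _)
      (Real.exp_le_one_iff.2 (mul_nonpos_of_nonpos_of_nonneg hci hu.le))
  · refine .of_forall fun u => ?_
    have hexp : Tendsto (fun i => Real.exp (c i * u)) l (𝓝 1) := by
      simpa using (hc0.mul_const u).rexp
    have hlim := hexp.smul_const (g u)
    rw [one_smul] at hlim
    refine hlim.congr' ?_
    filter_upwards [hT.eventually_ge_atTop u] with i hi
    exact (Set.indicator_of_mem (Set.mem_Iic.2 hi) (fun u => Real.exp (c i * u) • g u)).symm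

theorem drift_load_integral_high_dim_general (lam : ℝ) (hlam : 0 < lam)
    (f : ℝ → ℝ)
    (hfi : IntegrableOn f (Set.Ioi 0) volume)
    (r : ℕ → ℝ) (hr : ∀ N, r N ∈ Set.Ioc (0 : ℝ) 1)
    (hr0 : Tendsto r atTop (𝓝 0))
    (D : ℕ → ℝ) (hD : ∀ N, 0 < D N) (hD1 : Tendsto D atTop (𝓝 1))
    (t : ℕ → ℝ)
    (htr : Tendsto (fun N => t N / r N ^ 2) atTop atTop) :
    Tendsto (fun N => (r N ^ 2)⁻¹ *
        ∫ s in Set.Ioc 0 (t N), Real.exp (-2 * lam * s) * f (D N * s / r N ^ 2))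
      atTop (𝓝 (∫ s in Set.Ioi (0 : ℝ), f s)) := by
  have hc : ∀ᶠ N in atTop, -2 * lam * r N ^ 2 / D N ≤ 0 :=
    .of_forall fun N => div_nonpos_of_nonpos_of_nonneg (by nlinarith [sq_nonneg (r N)]) (hD N).le
  have hc0 : Tendsto (fun N => -2 * lam * r N ^ 2 / D N) atTop (𝓝 0) := by
    have := ((hr0.pow 2).const_mul (-2 * lam)).div hD1 one_ne_zero
    rwa [zero_pow two_ne_zero, mul_zero, zero_div] at this
  have hT : Tendsto (fun N => D N / r N ^ 2 * t N) atTop atTop :=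
    (Tendsto.pos_mul_atTop one_pos hD1 htr).congr fun N => by ring
  have hlim := (hD1.inv₀ one_ne_zero).mul (tendsto_setIntegral_Ioc_exp_smul hfi hc hc0 hT)
  rw [inv_one, one_mul] at hlim
  exact hlim.congr fun N => (inv_mul_setIntegral_Ioc_exp_mul_comp_div (-2 * lam) f (hD N)
    (pow_pos (hr N).1 2) (t N)).symm

theorem drift_load_integral_high_dim (lam M : ℝ) (hlam : 0 < lam) (hM : 0 < M)
    (f : ℝ → ℝ) (hfm : Measurable f)
    (hf : ∀ t ∈ Set.Ioi (0 : ℝ), f t ∈ Set.Icc (0 : ℝ) M)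
    (hfi : IntegrableOn f (Set.Ioi 0) volume)
    (r : ℕ → ℝ) (hr : ∀ N, r N ∈ Set.Ioc (0 : ℝ) 1)
    (hr0 : Tendsto r atTop (𝓝 0))
    (D : ℕ → ℝ) (hD : ∀ N, 0 < D N) (hD1 : Tendsto D atTop (𝓝 1))
    (t : ℕ → ℝ) (ht : ∀ N, 0 < t N)
    (htr : Tendsto (fun N => t N / r N ^ 2) atTop atTop) :
    Tendsto (fun N => (r N ^ 2)⁻¹ *
        ∫ s in Set.Ioc 0 (t N), Real.exp (-2 * lam * s) * f (D N * s / r N ^ 2))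
      atTop (𝓝 (∫ s in Set.Ioi (0 : ℝ), f s)) :=
  drift_load_integral_high_dim_general lam hlam f hfi r hr hr0 D hD hD1 t htr
end

section
/- Let λ > 0, M > 0, c ≥ 0 and let f : (0,∞) → [0,M] be measurable with √t · f(t) → c as t → ∞. Let (r_N) be a sequence in (0,1] with r_N → 0, let (D_N) be a sequence of positive reals with D_N → 1, and let (t_N) be a sequence of positive reals with t_N → ∞. Then r_N^{−1} ∫_0^{t_N} e^{−2λs} f(D_N s / r_N²) ds → c ∫_0^∞ e^{−2λs} s^{−1/2} ds as N → ∞. -/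
open MeasureTheory Filter Set Real
open scoped Topology

/-!
With `u = D s / r²` the rescaled integrand is `r⁻¹ f u = √u f u / √(D s)`. The numerator tends
to `c` since `u → ∞`, and it is bounded on `(0, ∞)` because `f` is bounded and `√u f u`
converges. So once `D ≥ 1/2` the integrand is dominated by `√2 C e^{-2λs} s^{-1/2}`, which is
integrable on `(0, ∞)`, and dominated convergence applies; the cut-off at `t_N` disappears in
the limit since `t_N → ∞`.
-/

lemma rpow_neg_one_div_two_eq_inv_sqrt {s : ℝ} (hs : 0 ≤ s) : s ^ (-(1 : ℝ) / 2) = (√s)⁻¹ := by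
  rw [neg_div, rpow_neg hs, sqrt_eq_rpow]

lemma integrableOn_exp_mul_mul_rpow_Ioi {b a : ℝ} (hb : b < 0) (ha : -1 < a) :
    IntegrableOn (fun s : ℝ => exp (b * s) * s ^ a) (Ioi 0) := by
  refine (integrableOn_rpow_mul_exp_neg_mul_rpow ha zero_lt_one (neg_pos.2 hb)).congr_fun
    (fun s _ => ?_) measurableSet_Ioi
  simp [mul_comm]

lemma exists_forall_abs_sqrt_mul_le {f : ℝ → ℝ} {M c : ℝ} (hf : ∀ u > 0, |f u| ≤ M)
    (hfc : Tendsto (fun u => √u * f u) atTop (𝓝 c)) : ∃ C, ∀ u > 0, |√u * f u| ≤ C := by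
  obtain ⟨T, hT⟩ := eventually_atTop.1 (hfc.abs.eventually (ge_mem_nhds (lt_add_one |c|)))
  refine ⟨max (|c| + 1) (√T * M), fun u hu => ?_⟩
  rcases le_or_gt T u with hTu | huT
  · exact (hT u hTu).trans (le_max_left _ _)
  · rw [abs_mul, abs_of_nonneg (sqrt_nonneg u)]
    exact (mul_le_mul (sqrt_le_sqrt huT.le) (hf u hu) (abs_nonneg _) (sqrt_nonneg T)).trans
      (le_max_right _ _)

lemma inv_mul_eq_sqrt_div_sq_mul_div_sqrt {r x : ℝ} (hr : 0 < r) (hx : 0 < x) (y : ℝ) :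
    r⁻¹ * y = √(x / r ^ 2) * y / √x := by
  rw [sqrt_div' _ (sq_nonneg r), sqrt_sq hr.le]
  field_simp [(sqrt_pos.2 hx).ne']

lemma abs_inv_mul_comp_mul_div_sq_le {f : ℝ → ℝ} {C r D s : ℝ}
    (hC : ∀ u > 0, |√u * f u| ≤ C) (hr : 0 < r) (hD : 1 / 2 ≤ D) (hs : 0 < s) :
    |r⁻¹ * f (D * s / r ^ 2)| ≤ √2 * C * s ^ (-(1 : ℝ) / 2) := by
  have hDs : 0 < D * s := by nlinarith
  have hsqrt : √s ≤ √2 * √(D * s) := by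
    rw [← sqrt_mul zero_le_two]
    exact sqrt_le_sqrt (by nlinarith)
  have hC0 : 0 ≤ C := (abs_nonneg _).trans (hC 1 one_pos)
  rw [inv_mul_eq_sqrt_div_sq_mul_div_sqrt hr hDs, abs_div, abs_of_pos (sqrt_pos.2 hDs),
    rpow_neg_one_div_two_eq_inv_sqrt hs.le, div_le_iff₀ (sqrt_pos.2 hDs)]
  calc |√(D * s / r ^ 2) * f (D * s / r ^ 2)| ≤ C := hC _ (by positivity)
    _ = C * (√s)⁻¹ * √s := by field_simp [(sqrt_pos.2 hs).ne']
    _ ≤ C * (√s)⁻¹ * (√2 * √(D * s)) := by gcongr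
    _ = √2 * C * (√s)⁻¹ * √(D * s) := by ring

lemma tendsto_mul_div_sq_atTop {ι : Type*} {l : Filter ι} {r D : ι → ℝ} (hr : ∀ i, 0 < r i)
    (hr0 : Tendsto r l (𝓝 0)) (hD1 : Tendsto D l (𝓝 1)) {s : ℝ} (hs : 0 < s) :
    Tendsto (fun i => D i * s / r i ^ 2) l atTop := by
  have hr2 : Tendsto (fun i => r i ^ 2) l (𝓝[>] 0) :=
    tendsto_nhdsWithin_of_tendsto_nhds_of_eventually_within _ (by simpa using hr0.pow 2)
      (Eventually.of_forall fun i => pow_pos (hr i) 2)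
  simpa only [div_eq_mul_inv, Pi.inv_apply] using
    (by simpa using hD1.mul_const s : Tendsto (fun i => D i * s) l (𝓝 s)).pos_mul_atTop hs
      hr2.inv_tendsto_nhdsGT_zero

lemma tendsto_inv_mul_comp_mul_div_sq {ι : Type*} {l : Filter ι} {f : ℝ → ℝ} {c : ℝ}
    (hfc : Tendsto (fun u => √u * f u) atTop (𝓝 c)) {r D : ι → ℝ} (hr : ∀ i, 0 < r i)
    (hr0 : Tendsto r l (𝓝 0)) (hD : ∀ i, 0 < D i) (hD1 : Tendsto D l (𝓝 1)) {s : ℝ}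
    (hs : 0 < s) :
    Tendsto (fun i => (r i)⁻¹ * f (D i * s / r i ^ 2)) l (𝓝 (c * s ^ (-(1 : ℝ) / 2))) := by
  have hsqrt : Tendsto (fun i => √(D i * s)) l (𝓝 √s) := by
    simpa using (hD1.mul_const s).sqrt
  rw [rpow_neg_one_div_two_eq_inv_sqrt hs.le, ← div_eq_mul_inv]
  refine ((hfc.comp (tendsto_mul_div_sq_atTop hr hr0 hD1 hs)).div hsqrt
    (sqrt_pos.2 hs).ne').congr fun i => ?_
  exact (inv_mul_eq_sqrt_div_sq_mul_div_sqrt (hr i) (mul_pos (hD i) hs) _).symm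

lemma tendsto_setIntegral_Ioc_of_dominated {ι : Type*} {l : Filter ι} [l.IsCountablyGenerated]
    {G : ι → ℝ → ℝ} {g bound : ℝ → ℝ} {t : ι → ℝ} {a : ℝ}
    (hGm : ∀ i, AEStronglyMeasurable (G i) (volume.restrict (Ioi a)))
    (hbound : IntegrableOn bound (Ioi a)) (hdom : ∀ᶠ i in l, ∀ s > a, ‖G i s‖ ≤ bound s)
    (hlim : ∀ s > a, Tendsto (G · s) l (𝓝 (g s))) (ht : Tendsto t l atTop) :
    Tendsto (fun i => ∫ s in Ioc a (t i), G i s) l (𝓝 (∫ s in Ioi a, g s)) := by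
  have hind (i : ι) :
      ∫ s in Ioc a (t i), G i s = ∫ s in Ioi a, (Ioc a (t i)).indicator (G i) s := by
    rw [setIntegral_indicator measurableSet_Ioc, inter_eq_right.2 Ioc_subset_Ioi_self]
  simp_rw [hind]
  refine tendsto_integral_filter_of_dominated_convergence bound
    (Eventually.of_forall fun i => (hGm i).indicator measurableSet_Ioc) ?_ hbound ?_
  · filter_upwards [hdom] with i hi
    filter_upwards [ae_restrict_mem measurableSet_Ioi] with s hs
    exact (norm_indicator_le_norm_self _ _).trans (hi s hs)
  · filter_upwards [ae_restrict_mem measurableSet_Ioi] with s hs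
    refine (hlim s hs).congr' ?_
    filter_upwards [ht.eventually_ge_atTop s] with i hi
    rw [indicator_of_mem (show s ∈ Ioc a (t i) from ⟨hs, hi⟩)]

theorem drift_load_integral_dim_one_general (lam M c : ℝ) (hlam : 0 < lam) (f : ℝ → ℝ)
    (hfm : Measurable f) (hf : ∀ t ∈ Set.Ioi (0 : ℝ), f t ∈ Set.Icc (0 : ℝ) M)
    (hfc : Tendsto (fun t => Real.sqrt t * f t) atTop (𝓝 c))
    (r : ℕ → ℝ) (hr : ∀ N, r N ∈ Set.Ioc (0 : ℝ) 1)
    (hr0 : Tendsto r atTop (𝓝 0))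
    (D : ℕ → ℝ) (hD : ∀ N, 0 < D N) (hD1 : Tendsto D atTop (𝓝 1))
    (t : ℕ → ℝ) (htop : Tendsto t atTop atTop) :
    Tendsto (fun N => (r N)⁻¹ *
        ∫ s in Set.Ioc 0 (t N), Real.exp (-2 * lam * s) * f (D N * s / r N ^ 2))
      atTop
      (𝓝 (c * ∫ s in Set.Ioi (0 : ℝ), Real.exp (-2 * lam * s) * s ^ (-(1 : ℝ) / 2))) := by
  obtain ⟨C, hC⟩ := exists_forall_abs_sqrt_mul_le
    (fun u hu => (abs_of_nonneg (hf u hu).1).trans_le (hf u hu).2) hfc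
  have hr_pos (N : ℕ) : 0 < r N := (hr N).1
  have hdom : ∀ᶠ N in atTop, ∀ s > 0,
      ‖exp (-2 * lam * s) * ((r N)⁻¹ * f (D N * s / r N ^ 2))‖ ≤
        √2 * C * (exp (-2 * lam * s) * s ^ (-(1 : ℝ) / 2)) := by
    filter_upwards [hD1.eventually_const_le (by norm_num : (1 : ℝ) / 2 < 1)] with N hN s hs
    rw [norm_mul, norm_of_nonneg (exp_pos _).le, norm_eq_abs, mul_left_comm]
    gcongr
    exact abs_inv_mul_comp_mul_div_sq_le hC (hr_pos N) hN hs
  have key := tendsto_setIntegral_Ioc_of_dominated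
    (fun N => (by fun_prop : Measurable _).aestronglyMeasurable)
    ((integrableOn_exp_mul_mul_rpow_Ioi (by linarith) (by norm_num)).const_mul (√2 * C)) hdom
    (fun s hs => (tendsto_inv_mul_comp_mul_div_sq hfc hr_pos hr0 hD hD1 hs).const_mul
      (exp (-2 * lam * s)))
    htop
  simpa only [mul_left_comm _ (r _)⁻¹, mul_left_comm _ c, integral_const_mul] using key

theorem drift_load_integral_dim_one (lam M c : ℝ) (hlam : 0 < lam) (hM : 0 < M)
    (hc : 0 ≤ c) (f : ℝ → ℝ) (hfm : Measurable f)
    (hf : ∀ t ∈ Set.Ioi (0 : ℝ), f t ∈ Set.Icc (0 : ℝ) M)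
    (hfc : Tendsto (fun t => Real.sqrt t * f t) atTop (𝓝 c))
    (r : ℕ → ℝ) (hr : ∀ N, r N ∈ Set.Ioc (0 : ℝ) 1)
    (hr0 : Tendsto r atTop (𝓝 0))
    (D : ℕ → ℝ) (hD : ∀ N, 0 < D N) (hD1 : Tendsto D atTop (𝓝 1))
    (t : ℕ → ℝ) (ht : ∀ N, 0 < t N) (htop : Tendsto t atTop atTop) :
    Tendsto (fun N => (r N)⁻¹ *
        ∫ s in Set.Ioc 0 (t N), Real.exp (-2 * lam * s) * f (D N * s / r N ^ 2))
      atTop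
      (𝓝 (c * ∫ s in Set.Ioi (0 : ℝ), Real.exp (-2 * lam * s) * s ^ (-(1 : ℝ) / 2))) :=
  drift_load_integral_dim_one_general lam M c hlam f hfm hf hfc r hr hr0 D hD hD1 t htop
end

section
/- Let F : ℝ → ℝ be continuously differentiable and let λ ∈ (0,1) satisfy F(λ) = 0, F'(λ) > 0, and F(x) ≠ 0 for every x ∈ [0,1] with x ≠ λ. Define R₁ : [0,1] → ℝ by R₁(x) = ∫_0^1 F'(x + t(λ − x)) dt. Then inf_{x∈[0,1]} R₁(x) > 0. -/
/-!
By the fundamental theorem of calculus `(λ - x) R₁(x) = F(λ) - F(x) = -F(x)`, so the continuous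
function `R₁` has no zero on `[0,1]`: at `x ≠ λ` because `F(x) ≠ 0`, and at `λ` because
`R₁(λ) = F'(λ) > 0`. Being continuous on the connected set `[0,1]` and positive at `λ`, it is
positive throughout, hence bounded below by its positive minimum on the compact set `[0,1]`.
-/

open MeasureTheory Set

theorem continuous_intervalIntegral_comp_segment {E : Type*} [NormedAddCommGroup E]
    [NormedSpace ℝ E] {f : ℝ → E} (hf : Continuous f) (l : ℝ) :
    Continuous fun x : ℝ => ∫ t in (0 : ℝ)..1, f (x + t * (l - x)) :=
  intervalIntegral.continuous_parametric_intervalIntegral_of_continuous' (by fun_prop) 0 1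

theorem sub_smul_intervalIntegral_deriv_comp_segment {E : Type*} [NormedAddCommGroup E]
    [NormedSpace ℝ E] [CompleteSpace E] {F : ℝ → E} (hF : ContDiff ℝ 1 F) (x l : ℝ) :
    (l - x) • ∫ t in (0 : ℝ)..1, deriv F (x + t * (l - x)) = F l - F x := by
  simp_rw [mul_comm _ (l - x)]
  rw [intervalIntegral.smul_integral_comp_add_mul, intervalIntegral.integral_deriv_eq_sub
    (fun y _ => hF.differentiable one_ne_zero y)
    ((hF.continuous_deriv le_rfl).intervalIntegrable _ _)]
  ring_nf

theorem IsPreconnected.forall_pos_of_ne_zero {X : Type*} [TopologicalSpace X] {s : Set X}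
    (hs : IsPreconnected s) {g : X → ℝ} (hg : ContinuousOn g s) {a : X} (ha : a ∈ s)
    (hga : 0 < g a) (hne : ∀ x ∈ s, g x ≠ 0) : ∀ x ∈ s, 0 < g x := by
  intro x hx
  by_contra! hgx
  obtain ⟨z, hz, hgz⟩ := hs.intermediate_value hx ha hg ⟨hgx, hga.le⟩
  exact hne z hz hgz

theorem Continuous.iInf_pos_of_compactSpace {β : Type*} [TopologicalSpace β] [CompactSpace β]
    [Nonempty β] {f : β → ℝ} (hf : Continuous f) (hpos : ∀ x, 0 < f x) : 0 < ⨅ x, f x := by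
  obtain ⟨x₀, -, hmin⟩ := isCompact_univ.exists_isMinOn univ_nonempty hf.continuousOn
  exact (hpos x₀).trans_le (le_ciInf fun x => hmin (mem_univ x))

theorem R1_inf_pos (F : ℝ → ℝ) (hF : ContDiff ℝ 1 F) (l : ℝ)
    (hl : l ∈ Set.Ioo (0 : ℝ) 1) (hFl : F l = 0) (hF'l : 0 < deriv F l)
    (hFne : ∀ x ∈ Set.Icc (0 : ℝ) 1, x ≠ l → F x ≠ 0) :
    0 < ⨅ x : Set.Icc (0 : ℝ) 1, ∫ t in (0 : ℝ)..1, deriv F (↑x + t * (l - ↑x)) := by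
  set R₁ : ℝ → ℝ := fun x => ∫ t in (0 : ℝ)..1, deriv F (x + t * (l - x))
  have hR₁_cont : Continuous R₁ :=
    continuous_intervalIntegral_comp_segment (hF.continuous_deriv le_rfl) l
  have hR₁_l : R₁ l = deriv F l := by simp [R₁]
  have hR₁_ne : ∀ x ∈ Icc (0 : ℝ) 1, R₁ x ≠ 0 := by
    intro x hx
    rcases eq_or_ne x l with rfl | hxl
    · exact hR₁_l ▸ hF'l.ne'
    · have hFTC := sub_smul_intervalIntegral_deriv_comp_segment hF x l
      rw [smul_eq_mul, hFl, zero_sub] at hFTC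
      exact right_ne_zero_of_mul (hFTC ▸ neg_ne_zero.mpr (hFne x hx hxl))
  have hR₁_pos := isPreconnected_Icc.forall_pos_of_ne_zero hR₁_cont.continuousOn
    (Ioo_subset_Icc_self hl) (hR₁_l ▸ hF'l) hR₁_ne
  exact (hR₁_cont.comp continuous_subtype_val).iInf_pos_of_compactSpace fun x => hR₁_pos x x.2
end
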